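/- arXiv:2605.12191 — 8 statements merged into one kernel-verified Lean document; each statement's English description precedes it below -/
import Mathlib

section
/- Let (V, E, V_□, V_◇, w) be a finite arena with real payoffs, let λ ∈ ℝ, let ℓ ≥ 1 be an integer, let T ⊆ V, and let v ∈ V. If Player 1 has a strategy σ from v such that every outcome of σ satisfies DirFWMP(ℓ, λ) and at least one outcome of σ visits T, then Player 1 has a strategy σ' from v such that every outcome of σ' satisfies DirFWMP(ℓ, λ) and at least one outcome of σ' visits T within the first |V|·ℓ steps (i.e., π n ∈ T for some n ≤ |V|·ℓ). -/
/-- A finite arena: a deadlock-free edge relation `E`, a set `P1` of Player-1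
vertices (the probabilistic vertices `V_◇` form the complement of `P1`), and a
real payoff `w` on edges. -/
structure Arena (V : Type*) where
  E : V → V → Prop
  P1 : Set V
  w : V → V → ℝ
  nodeadlock : ∀ v : V, ∃ u : V, E v u

/-- A play is an infinite `E`-path. -/
def Arena.IsPlay {V : Type*} (A : Arena V) (π : ℕ → V) : Prop :=
  ∀ n : ℕ, A.E (π n) (π (n + 1))

/-- A strategy for Player 1: given the history (the strict prefix `v_0 … v_{n-1}`
of the current play) and the current vertex `v_n`, if `v_n` belongs to Player 1
then the strategy picks an out-neighbour of `v_n`. -/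
structure Arena.Strategy {V : Type*} (A : Arena V) where
  act : List V → V → V
  legal : ∀ (h : List V) (v : V), v ∈ A.P1 → A.E v (act h v)

/-- `π` is an outcome of strategy `σ` from `v`. -/
def Arena.IsOutcome {V : Type*} (A : Arena V) (σ : A.Strategy) (v : V) (π : ℕ → V) : Prop :=
  π 0 = v ∧ A.IsPlay π ∧
    ∀ n : ℕ, π n ∈ A.P1 → π (n + 1) = σ.act (List.ofFn fun i : Fin n => π i) (π n)

/-- Player 1 sure-wins objective `Φ` from `v`: some strategy has all of its
outcomes from `v` inside `Φ`. -/
def Arena.SureWins {V : Type*} (A : Arena V) (Φ : Set (ℕ → V)) (v : V) : Prop :=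
  ∃ σ : A.Strategy, ∀ π : ℕ → V, A.IsOutcome σ v π → π ∈ Φ

/-- Total payoff of the window of length `d` starting at position `i` of play `π`. -/
def Arena.winSum {V : Type*} (A : Arena V) (π : ℕ → V) (i d : ℕ) : ℝ :=
  ∑ k ∈ Finset.range d, A.w (π (i + k)) (π (i + k + 1))

/-- `π` satisfies `DirFWMP(ℓ, λ)`: every `λ`-window closes within `ℓ` steps. -/
def Arena.DirFWMP {V : Type*} (A : Arena V) (ℓ : ℕ) (lam : ℝ) (π : ℕ → V) : Prop :=
  ∀ i : ℕ, ∃ d : ℕ, 1 ≤ d ∧ d ≤ ℓ ∧ lam * (d : ℝ) ≤ A.winSum π i d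

/-! Call a position of a play *closed* if every window opened before it has closed by it.
From a closed position `m`, the end of the shortest good window at `m` is again closed, since
every window opened inside it closes exactly there; it lies at most `ℓ` further. So among the
first `|V| + 1` closed positions of a winning outcome `π`, all at most `|V|·ℓ`, two positions
`a < b` carry the same vertex. Let Player 1 play, once the play has followed `π` up to `a`, as
`σ` would after having followed `π` up to `b`. An outcome that leaves `π` before `a` is an outcome
of `σ`; any other is an outcome of `σ` with the cycle `[a, b)` cut out, and cutting at a closed
position opens no window that does not close. Cutting `π` itself yields an outcome that visits
`T` earlier by `b - a`; repeat until the visit happens by step `|V|·ℓ`. -/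

section PlayPrefix

variable {α : Type*}

def playPrefix (ρ : ℕ → α) (m : ℕ) : List α :=
  List.ofFn fun i : Fin m => ρ i

@[simp]
lemma length_playPrefix (ρ : ℕ → α) (m : ℕ) : (playPrefix ρ m).length = m :=
  List.length_ofFn

@[simp]
lemma getElem_playPrefix (ρ : ℕ → α) (m i : ℕ) (h : i < (playPrefix ρ m).length) :
    (playPrefix ρ m)[i] = ρ i := by
  simp [playPrefix]

lemma playPrefix_congr {ρ τ : ℕ → α} {m : ℕ} (h : ∀ i < m, ρ i = τ i) :
    playPrefix ρ m = playPrefix τ m :=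
  List.ext_getElem (by simp) fun i hi _ => by simpa using h i (by simpa using hi)

lemma playPrefix_succ (ρ : ℕ → α) (m : ℕ) :
    playPrefix ρ (m + 1) = playPrefix ρ m ++ [ρ m] :=
  List.ofFn_succ_last

lemma playPrefix_add (ρ : ℕ → α) (m k : ℕ) :
    playPrefix ρ (m + k) = playPrefix ρ m ++ playPrefix (fun t => ρ (m + t)) k :=
  List.ofFn_add

lemma drop_playPrefix (ρ : ℕ → α) (m a : ℕ) :
    (playPrefix ρ m).drop a = playPrefix (fun t => ρ (a + t)) (m - a) :=
  List.ext_getElem (by simp) fun i _ _ => by simp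

lemma playPrefix_prefix_playPrefix_iff {ρ τ : ℕ → α} {k m : ℕ} :
    playPrefix ρ k <+: playPrefix τ m ↔ k ≤ m ∧ ∀ i < k, ρ i = τ i := by
  simp [List.prefix_iff_getElem]

def splice (π : ℕ → α) (b : ℕ) (ρ : ℕ → α) (a : ℕ) : ℕ → α :=
  fun j => if j < b then π j else ρ (a + (j - b))

variable {π ρ : ℕ → α} {a b : ℕ}

lemma splice_of_lt {j : ℕ} (h : j < b) : splice π b ρ a j = π j :=
  if_pos h

lemma splice_add (t : ℕ) : splice π b ρ a (b + t) = ρ (a + t) := by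
  simp [splice]

lemma splice_eq_of_le (h : ρ a = π b) {i : ℕ} (hi : i ≤ b) : splice π b ρ a i = π i := by
  rcases hi.lt_or_eq with hi | rfl
  · exact splice_of_lt hi
  · simpa [h] using splice_add (π := π) (ρ := ρ) (a := a) (b := i) 0

lemma playPrefix_splice (m : ℕ) :
    playPrefix (splice π b ρ a) (b + (m - a)) = playPrefix π b ++ (playPrefix ρ m).drop a := by
  rw [playPrefix_add, drop_playPrefix, playPrefix_congr fun i hi => splice_of_lt hi]
  simp only [splice_add]

end PlayPrefix

namespace Arena

variable {V : Type*} {A : Arena V}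

def StepConsistent (A : Arena V) (σ : A.Strategy) (ρ : ℕ → V) (m : ℕ) : Prop :=
  A.E (ρ m) (ρ (m + 1)) ∧ (ρ m ∈ A.P1 → ρ (m + 1) = σ.act (playPrefix ρ m) (ρ m))

lemma isOutcome_iff_stepConsistent {σ : A.Strategy} {v : V} {ρ : ℕ → V} :
    A.IsOutcome σ v ρ ↔ ρ 0 = v ∧ ∀ m, A.StepConsistent σ ρ m := by
  simp only [IsOutcome, IsPlay, StepConsistent, forall_and]
  rfl

lemma StepConsistent.of_agree {σ : A.Strategy} {π ρ : ℕ → V} {m : ℕ}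
    (h : A.StepConsistent σ π m) (hag : ∀ i ≤ m + 1, ρ i = π i) : A.StepConsistent σ ρ m := by
  rw [StepConsistent, hag m (by omega), hag (m + 1) le_rfl,
    playPrefix_congr fun i hi => hag i (by omega)]
  exact h

open Classical in
noncomputable def Strategy.cut (σ : A.Strategy) (π : ℕ → V) (a b : ℕ) : A.Strategy where
  act h u :=
    if playPrefix π (a + 1) <+: h ++ [u] then σ.act (playPrefix π b ++ h.drop a) u
    else σ.act h u
  legal h u hu := by split <;> exact σ.legal _ _ hu

variable {σ : A.Strategy} {π ρ : ℕ → V} {a b m : ℕ}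

lemma Strategy.cut_act_of_agree (hm : a ≤ m) (hag : ∀ i ≤ a, ρ i = π i) :
    (σ.cut π a b).act (playPrefix ρ m) (ρ m) =
      σ.act (playPrefix π b ++ (playPrefix ρ m).drop a) (ρ m) := by
  refine if_pos ?_
  rw [← playPrefix_succ, playPrefix_prefix_playPrefix_iff]
  exact ⟨by omega, fun i hi => (hag i (by omega)).symm⟩

lemma Strategy.cut_act_of_not_agree (h : ¬ (a ≤ m ∧ ∀ i ≤ a, ρ i = π i)) :
    (σ.cut π a b).act (playPrefix ρ m) (ρ m) = σ.act (playPrefix ρ m) (ρ m) := by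
  refine if_neg ?_
  rw [← playPrefix_succ, playPrefix_prefix_playPrefix_iff]
  exact fun ⟨_, hag⟩ => h ⟨by omega, fun i hi => (hag i (by omega)).symm⟩

lemma isOutcome_of_isOutcome_cut {v : V} (h : A.IsOutcome (σ.cut π a b) v ρ)
    (hag : ¬ ∀ i ≤ a, ρ i = π i) : A.IsOutcome σ v ρ := by
  obtain ⟨h0, hplay, hstep⟩ := h
  refine ⟨h0, hplay, fun m hm => (hstep m hm).trans ?_⟩
  exact Strategy.cut_act_of_not_agree fun h => hag h.2

lemma stepConsistent_cut_of_lt (hπ : ∀ m, A.StepConsistent σ π m) (hag : ∀ i ≤ a, ρ i = π i)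
    (hm : m < a) : A.StepConsistent (σ.cut π a b) ρ m := by
  have hρm : ρ m = π m := hag m hm.le
  refine ⟨by rw [hρm, hag (m + 1) hm]; exact (hπ m).1, fun hP => ?_⟩
  rw [Strategy.cut_act_of_not_agree (by omega), hag (m + 1) hm,
    playPrefix_congr fun i hi => hag i (by omega), hρm]
  exact (hπ m).2 (hρm ▸ hP)

lemma stepConsistent_cut_add_iff (hag : ∀ i ≤ a, ρ i = π i) (t : ℕ) :
    A.StepConsistent (σ.cut π a b) ρ (a + t) ↔ A.StepConsistent σ (splice π b ρ a) (b + t) := by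
  have hpre := playPrefix_splice (π := π) (b := b) (ρ := ρ) (a := a) (a + t)
  rw [Nat.add_sub_cancel_left] at hpre
  have hρ : ∀ s, ρ (a + s) = splice π b ρ a (b + s) := fun s => (splice_add s).symm
  rw [StepConsistent, StepConsistent, Strategy.cut_act_of_agree (by omega) hag, ← hpre,
    add_assoc a t 1, hρ, hρ, ← add_assoc]

lemma isOutcome_cut_iff {v : V} (hπ : A.IsOutcome σ v π) (hab : π a = π b)
    (hag : ∀ i ≤ a, ρ i = π i) :
    A.IsOutcome (σ.cut π a b) v ρ ↔ A.IsOutcome σ v (splice π b ρ a) := by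
  have hspliceπ : ∀ i ≤ b, splice π b ρ a i = π i :=
    fun _ => splice_eq_of_le ((hag a le_rfl).trans hab)
  rw [isOutcome_iff_stepConsistent] at hπ
  rw [isOutcome_iff_stepConsistent, isOutcome_iff_stepConsistent, hag 0 (by omega),
    hspliceπ 0 (by omega), hπ.1]
  refine and_congr_right fun _ => ⟨fun h j => ?_, fun h m => ?_⟩
  · rcases lt_or_ge j b with hj | hj
    · exact (hπ.2 j).of_agree fun i hi => hspliceπ i (by omega)
    · obtain ⟨t, rfl⟩ := Nat.exists_eq_add_of_le hj
      exact (stepConsistent_cut_add_iff hag t).1 (h _)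
  · rcases lt_or_ge m a with hm | hm
    · exact stepConsistent_cut_of_lt hπ.2 hag hm
    · obtain ⟨t, rfl⟩ := Nat.exists_eq_add_of_le hm
      exact (stepConsistent_cut_add_iff hag t).2 (h _)

lemma winSum_add (π : ℕ → V) (i d e : ℕ) :
    A.winSum π i (d + e) = A.winSum π i d + A.winSum π (i + d) e := by
  simp only [winSum, Finset.sum_range_add, add_assoc]

lemma winSum_congr {i j d : ℕ} (h : ∀ k ≤ d, ρ (i + k) = π (j + k)) :
    A.winSum ρ i d = A.winSum π j d :=
  Finset.sum_congr rfl fun k hk => by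
    have hk : k < d := Finset.mem_range.1 hk
    rw [add_assoc, add_assoc, h k hk.le, h (k + 1) hk]

variable {ℓ : ℕ} {lam : ℝ}

def WindowsClosedAt (A : Arena V) (ℓ : ℕ) (lam : ℝ) (π : ℕ → V) (m : ℕ) : Prop :=
  ∀ i < m, ∃ d, 1 ≤ d ∧ d ≤ ℓ ∧ i + d ≤ m ∧ lam * d ≤ A.winSum π i d

lemma WindowsClosedAt.exists_next (hπ : A.DirFWMP ℓ lam π) (hm : A.WindowsClosedAt ℓ lam π m) :
    ∃ m', m < m' ∧ m' ≤ m + ℓ ∧ A.WindowsClosedAt ℓ lam π m' := by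
  classical
  have hex : ∃ d, 1 ≤ d ∧ lam * d ≤ A.winSum π m d := (hπ m).imp fun d hd => ⟨hd.1, hd.2.2⟩
  obtain ⟨hd1, hdsum⟩ := Nat.find_spec hex
  have hdℓ : Nat.find hex ≤ ℓ := by
    obtain ⟨e, he1, heℓ, hes⟩ := hπ m
    exact (Nat.find_min' hex ⟨he1, hes⟩).trans heℓ
  refine ⟨m + Nat.find hex, by omega, by omega, fun i hi => ?_⟩
  rcases lt_trichotomy i m with hi' | rfl | hi'
  · obtain ⟨e, he1, heℓ, hem, hes⟩ := hm i hi'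
    exact ⟨e, he1, heℓ, by omega, hes⟩
  · exact ⟨_, hd1, hdℓ, le_rfl, hdsum⟩
  -- the shortest window at `m` is still below `lam` at `i`, so what remains of it is above `lam`
  obtain ⟨e, rfl⟩ : ∃ e, i = m + e := ⟨i - m, by omega⟩
  obtain ⟨r, hr⟩ : ∃ r, Nat.find hex = e + r := ⟨Nat.find hex - e, by omega⟩
  have hopen : A.winSum π m e < lam * e := by
    have := Nat.find_min hex (show e < Nat.find hex by omega)
    push Not at this
    exact this (by omega)
  have hsplit := winSum_add (A := A) π m e r
  rw [hr, Nat.cast_add] at hdsum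
  refine ⟨r, by omega, by omega, by omega, ?_⟩
  linarith

lemma exists_cycle_windowsClosedAt [Fintype V] (hπ : A.DirFWMP ℓ lam π) :
    ∃ a b, a < b ∧ b ≤ Fintype.card V * ℓ ∧ π a = π b ∧ A.WindowsClosedAt ℓ lam π a := by
  choose! next hnext_gt hnext_le hnext_closed using
    fun m (hm : A.WindowsClosedAt ℓ lam π m) => hm.exists_next hπ
  set p : ℕ → ℕ := fun k => next^[k] 0 with hp
  have hp_succ : ∀ k, p (k + 1) = next (p k) := fun k => Function.iterate_succ_apply' _ _ _
  have hclosed : ∀ k, A.WindowsClosedAt ℓ lam π (p k) := by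
    intro k
    induction k with
    | zero => exact fun i hi => absurd hi (Nat.not_lt_zero i)
    | succ k ih => exact hp_succ k ▸ hnext_closed _ ih
  have hmono : StrictMono p :=
    strictMono_nat_of_lt_succ fun k => hp_succ k ▸ hnext_gt _ (hclosed k)
  have hbound : ∀ k, p k ≤ k * ℓ := by
    intro k
    induction k with
    | zero => simp [hp]
    | succ k ih => rw [hp_succ, add_mul, one_mul]; linarith [hnext_le _ (hclosed k)]
  obtain ⟨x, y, hne, hxy⟩ := Fintype.exists_ne_map_eq_of_card_lt
    (fun k : Fin (Fintype.card V + 1) => π (p k)) (by simp)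
  wlog h : x < y generalizing x y
  · exact this y x hne.symm hxy.symm (lt_of_le_of_ne (not_lt.1 h) hne.symm)
  exact ⟨p x, p y, hmono h, (hbound y).trans (Nat.mul_le_mul_right _ (by omega)), hxy, hclosed x⟩

lemma dirFWMP_of_dirFWMP_splice (hclosed : A.WindowsClosedAt ℓ lam π a)
    (hag : ∀ i ≤ a, ρ i = π i) (h : A.DirFWMP ℓ lam (splice π b ρ a)) : A.DirFWMP ℓ lam ρ := by
  intro i
  rcases lt_or_ge i a with hi | hi
  · obtain ⟨d, hd1, hdℓ, hda, hd⟩ := hclosed i hi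
    refine ⟨d, hd1, hdℓ, ?_⟩
    rwa [winSum_congr fun k hk => hag (i + k) (by omega)]
  · obtain ⟨t, rfl⟩ := Nat.exists_eq_add_of_le hi
    obtain ⟨d, hd1, hdℓ, hd⟩ := h (b + t)
    refine ⟨d, hd1, hdℓ, ?_⟩
    rwa [winSum_congr (π := splice π b ρ a) (j := b + t) fun k _ => by
      rw [add_assoc, add_assoc, splice_add]]

lemma exists_earlier_visit [Fintype V] {v : V} (hσ : ∀ ρ, A.IsOutcome σ v ρ → A.DirFWMP ℓ lam ρ)
    (hπ : A.IsOutcome σ v π) {n : ℕ} (hn : Fintype.card V * ℓ < n) :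
    ∃ σ' : A.Strategy, (∀ ρ, A.IsOutcome σ' v ρ → A.DirFWMP ℓ lam ρ) ∧
      ∃ π', A.IsOutcome σ' v π' ∧ ∃ n' < n, π' n' = π n := by
  obtain ⟨a, b, hab, hbn, hcycle, hclosed⟩ := exists_cycle_windowsClosedAt (hσ π hπ)
  have hcut_agree : ∀ i ≤ a, splice π a π b i = π i := fun _ => splice_eq_of_le hcycle.symm
  have hsplice_cut : splice π b (splice π a π b) a = π := by
    funext j
    simp only [splice]
    split_ifs <;> first | rfl | (congr 1; omega)
  refine ⟨σ.cut π a b, fun ρ hρ => ?_, splice π a π b, ?_, n - (b - a), by omega, ?_⟩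
  · by_cases hag : ∀ i ≤ a, ρ i = π i
    · exact dirFWMP_of_dirFWMP_splice hclosed hag (hσ _ ((isOutcome_cut_iff hπ hcycle hag).1 hρ))
    · exact hσ ρ (isOutcome_of_isOutcome_cut hρ hag)
  · rw [isOutcome_cut_iff hπ hcycle hcut_agree, hsplice_cut]
    exact hπ
  · simpa [show a + (n - b) = n - (b - a) by omega, show b + (n - b) = n by omega] using
      splice_add (π := π) (ρ := π) (a := b) (b := a) (n - b)

end Arena

theorem sure_dirfwmp_positive_reach_bounded_general
    {V : Type*} [Fintype V] (A : Arena V) (lam : ℝ) (ℓ : ℕ)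
    (T : Set V) (v : V)
    (h : ∃ σ : A.Strategy,
      (∀ π : ℕ → V, A.IsOutcome σ v π → A.DirFWMP ℓ lam π) ∧
      (∃ π : ℕ → V, A.IsOutcome σ v π ∧ ∃ n : ℕ, π n ∈ T)) :
    ∃ σ' : A.Strategy,
      (∀ π : ℕ → V, A.IsOutcome σ' v π → A.DirFWMP ℓ lam π) ∧
      (∃ π : ℕ → V, A.IsOutcome σ' v π ∧ ∃ n : ℕ, n ≤ Fintype.card V * ℓ ∧ π n ∈ T) := by
  obtain ⟨σ, hσ, π, hπ, n, hT⟩ := h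
  induction n using Nat.strong_induction_on generalizing σ π with
  | _ n ih =>
  by_cases hn : n ≤ Fintype.card V * ℓ
  · exact ⟨σ, hσ, π, hπ, n, hn, hT⟩
  obtain ⟨σ', hσ', π', hπ', n', hn', hπ'n'⟩ := Arena.exists_earlier_visit hσ hπ (not_le.1 hn)
  exact ih n' hn' σ' hσ' π' hπ' (hπ'n' ▸ hT)

/-- If Player 1 has a strategy from `v` whose outcomes all satisfy
`DirFWMP(ℓ, λ)` and some outcome visits `T`, then Player 1 has such a strategy
where some outcome visits `T` within the first `|V|·ℓ` steps. -/
theorem sure_dirfwmp_positive_reach_bounded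
    {V : Type*} [Fintype V] [Nonempty V] (A : Arena V) (lam : ℝ) (ℓ : ℕ) (hℓ : 1 ≤ ℓ)
    (T : Set V) (v : V)
    (h : ∃ σ : A.Strategy,
      (∀ π : ℕ → V, A.IsOutcome σ v π → A.DirFWMP ℓ lam π) ∧
      (∃ π : ℕ → V, A.IsOutcome σ v π ∧ ∃ n : ℕ, π n ∈ T)) :
    ∃ σ' : A.Strategy,
      (∀ π : ℕ → V, A.IsOutcome σ' v π → A.DirFWMP ℓ lam π) ∧
      (∃ π : ℕ → V, A.IsOutcome σ' v π ∧ ∃ n : ℕ, n ≤ Fintype.card V * ℓ ∧ π n ∈ T) :=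
  sure_dirfwmp_positive_reach_bounded_general A lam ℓ T v h
end

section
/- Let (V, E, V_□, V_◇, w) be a finite arena with integer payoffs w : E → ℤ, let λ ∈ ℤ, let T ⊆ V, and let v ∈ V. Write W_λ = max_{e ∈ E} |w(e) − λ| (for λ = 0 this is the maximum absolute payoff w_max). If Player 1 has a strategy σ from v such that every outcome of σ satisfies DirBWMP(λ) and at least one outcome of σ visits T, then Player 1 has a strategy σ' from v such that every outcome of σ' satisfies DirBWMP(λ) and at least one outcome of σ' visits T within the first |V|²·(|V|·W_λ + 1) steps. -/
open scoped Classical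

/-- A finite arena with integer payoffs: a deadlock-free edge relation `E`, a
set `P1` of Player-1 vertices (the probabilistic vertices `V_◇` form the
complement of `P1`), and an integer payoff `w` on edges. -/
structure ArenaZ (V : Type*) where
  E : V → V → Prop
  P1 : Set V
  w : V → V → ℤ
  nodeadlock : ∀ v : V, ∃ u : V, E v u

/-- A play is an infinite `E`-path. -/
def ArenaZ.IsPlay {V : Type*} (A : ArenaZ V) (π : ℕ → V) : Prop :=
  ∀ n : ℕ, A.E (π n) (π (n + 1))

/-- A strategy for Player 1: given the history (the strict prefix `v_0 … v_{n-1}`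
of the current play) and the current vertex `v_n`, if `v_n` belongs to Player 1
then the strategy picks an out-neighbour of `v_n`. -/
structure ArenaZ.Strategy {V : Type*} (A : ArenaZ V) where
  act : List V → V → V
  legal : ∀ (h : List V) (v : V), v ∈ A.P1 → A.E v (act h v)

/-- `π` is an outcome of strategy `σ` from `v`. -/
def ArenaZ.IsOutcome {V : Type*} (A : ArenaZ V) (σ : A.Strategy) (v : V) (π : ℕ → V) : Prop :=
  π 0 = v ∧ A.IsPlay π ∧
    ∀ n : ℕ, π n ∈ A.P1 → π (n + 1) = σ.act (List.ofFn fun i : Fin n => π i) (π n)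

/-- Player 1 sure-wins objective `Φ` from `v`: some strategy has all of its
outcomes from `v` inside `Φ`. -/
def ArenaZ.SureWins {V : Type*} (A : ArenaZ V) (Φ : Set (ℕ → V)) (v : V) : Prop :=
  ∃ σ : A.Strategy, ∀ π : ℕ → V, A.IsOutcome σ v π → π ∈ Φ

/-- Total payoff of the window of length `d` starting at position `i` of play `π`. -/
def ArenaZ.winSum {V : Type*} (A : ArenaZ V) (π : ℕ → V) (i d : ℕ) : ℤ :=
  ∑ k ∈ Finset.range d, A.w (π (i + k)) (π (i + k + 1))

/-- `π` satisfies `DirFWMP(ℓ, λ)`: every `λ`-window closes within `ℓ` steps. -/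
def ArenaZ.DirFWMP {V : Type*} (A : ArenaZ V) (ℓ : ℕ) (lam : ℤ) (π : ℕ → V) : Prop :=
  ∀ i : ℕ, ∃ d : ℕ, 1 ≤ d ∧ d ≤ ℓ ∧ lam * (d : ℤ) ≤ A.winSum π i d

/-- `π` satisfies `DirBWMP(λ)`: it satisfies `DirFWMP(ℓ, λ)` for some `ℓ ≥ 1`. -/
def ArenaZ.DirBWMP {V : Type*} (A : ArenaZ V) (lam : ℤ) (π : ℕ → V) : Prop :=
  ∃ ℓ : ℕ, 1 ≤ ℓ ∧ A.DirFWMP ℓ lam π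

/-- `W_λ = max_{e ∈ E} |w(e) − λ|`, the maximum absolute deviation of an edge
payoff from `λ` (for `λ = 0` this is the maximum absolute payoff `w_max`). -/
noncomputable def ArenaZ.maxDev {V : Type*} [Fintype V] (A : ArenaZ V) (lam : ℤ) : ℕ :=
  Finset.univ.sup fun e : V × V => if A.E e.1 e.2 then (A.w e.1 e.2 - lam).natAbs else 0

namespace CutProof

variable {V : Type*}

/-- history of a play -/
def hist (ρ : ℕ → V) (n : ℕ) : List V := List.ofFn fun k : Fin n => ρ k

@[simp] lemma hist_length (ρ : ℕ → V) (n : ℕ) : (hist ρ n).length = n := by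
  simp [hist]

lemma hist_getElem (ρ : ℕ → V) {n k : ℕ} (hk : k < n) :
    (hist ρ n)[k]'(by simpa using hk) = ρ k := by
  simp [hist]

lemma hist_succ (ρ : ℕ → V) (n : ℕ) : hist ρ (n + 1) = hist ρ n ++ [ρ n] := by
  unfold hist
  rw [List.ofFn_succ']
  simp [List.concat_eq_append]

lemma hist_getD (ρ : ℕ → V) {n k : ℕ} (hk : k < n) (d : V) :
    (hist ρ n).getD k d = ρ k := by
  rw [List.getD_eq_getElem _ _ (by simpa using hk), hist_getElem _ hk]

lemma hist_congr {ρ ρ' : ℕ → V} {n : ℕ} (h : ∀ k < n, ρ k = ρ' k) :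
    hist ρ n = hist ρ' n := by
  unfold hist
  congr 1
  ext k
  exact h k k.2

variable (A : ArenaZ V)

lemma winSum_add (π : ℕ → V) (p a b : ℕ) :
    A.winSum π p (a + b) = A.winSum π p a + A.winSum π (p + a) b := by
  unfold ArenaZ.winSum
  rw [Finset.sum_range_add]
  congr 1
  apply Finset.sum_congr rfl
  intro k _
  congr 2 <;> omega

lemma winSum_shift {π π' : ℕ → V} {p p' d : ℕ}
    (h : ∀ k ≤ d, π (p + k) = π' (p' + k)) :
    A.winSum π p d = A.winSum π' p' d := by
  unfold ArenaZ.winSum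
  apply Finset.sum_congr rfl
  intro k hk
  simp only [Finset.mem_range] at hk
  rw [h k (by omega), show p + k + 1 = p + (k+1) by ring, h (k+1) (by omega),
    show p' + (k+1) = p' + k + 1 by ring]

/-- chain lemma: windows can be iterated to reach arbitrarily large good prefixes -/
lemma exists_big_window {π : ℕ → V} {lam : ℤ} {ℓ : ℕ} (h : A.DirFWMP ℓ lam π)
    (p M : ℕ) : ∃ D : ℕ, M ≤ D ∧ lam * (D : ℤ) ≤ A.winSum π p D := by
  induction M with
  | zero => exact ⟨0, le_refl _, by simp [ArenaZ.winSum]⟩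
  | succ M ih =>
    obtain ⟨D, hMD, hD⟩ := ih
    obtain ⟨d, hd1, _, hdsum⟩ := h (p + D)
    refine ⟨D + d, by omega, ?_⟩
    rw [winSum_add]
    push_cast
    nlinarith [hD, hdsum]


section Cut

variable (π : ℕ → V) (i c : ℕ)

/-- the play obtained by cutting out the cycle `[i, i+c)` -/
def cutPlay : ℕ → V := fun n => if n < i then π n else π (n + c)

/-- reinsertion of the cycle `[i, i+c)` of `π` into a play `ρ` -/
def hatPlay (ρ : ℕ → V) : ℕ → V := fun n => if n < i + c then π n else ρ (n - c)

/-- the history (plus current vertex) agrees with `π` on `[0, i]` -/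
def cond (h : List V) (u : V) : Prop :=
  i ≤ h.length ∧ ∀ k ≤ i, (h ++ [u]).getD k u = π k

lemma cond_hist (ρ : ℕ → V) (n : ℕ) :
    cond π i (hist ρ n) (ρ n) ↔ (i ≤ n ∧ ∀ k ≤ i, ρ k = π k) := by
  rw [cond, ← hist_succ, hist_length]
  constructor
  · rintro ⟨hn, hk⟩
    exact ⟨hn, fun k hki => by rw [← hk k hki, hist_getD _ (by omega)]⟩
  · rintro ⟨hn, hk⟩
    exact ⟨hn, fun k hki => by rw [hist_getD _ (by omega)]; exact hk k hki⟩

variable {A : ArenaZ V}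

/-- the surgered strategy -/
noncomputable def cutStrat (σ : A.Strategy) : A.Strategy where
  act h u := if cond π i h u then σ.act (hist π (i + c) ++ h.drop i) u else σ.act h u
  legal h u hu := by
    by_cases hco : cond π i h u
    · simpa [hco] using σ.legal (hist π (i + c) ++ h.drop i) u hu
    · simpa [hco] using σ.legal h u hu

lemma translate_eq (ρ : ℕ → V) {n : ℕ} (hn : i ≤ n) :
    hist π (i + c) ++ (hist ρ n).drop i = hist (hatPlay π i c ρ) (n + c) := by
  apply List.ext_getElem
  · simp; omega
  · intro k hk1 hk2
    by_cases hki : k < i + c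
    · rw [List.getElem_append_left (by simpa using hki)]
      rw [hist_getElem _ hki, hist_getElem _ (by omega)]
      simp [hatPlay, hki]
    · rw [List.getElem_append_right (by simpa using hki)]
      rw [List.getElem_drop]
      simp only [hist_length]
      rw [hist_getElem _ (by simp at hk1 ⊢; omega), hist_getElem _ (by simp at hk2 ⊢; omega)]
      simp only [hatPlay]
      rw [if_neg (by omega)]
      congr 1
      omega

lemma hat_cut (ρ : ℕ → V) {m : ℕ} (hm : i ≤ m) : hatPlay π i c ρ (m + c) = ρ m := by
  simp only [hatPlay]
  rw [if_neg (by omega)]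
  congr 1
  omega

lemma hat_prefix (hvv : π i = π (i + c)) (ρ : ℕ → V) (hB : ∀ k ≤ i, ρ k = π k)
    {m : ℕ} (hm : m ≤ i + c) : hatPlay π i c ρ m = π m := by
  simp only [hatPlay]
  by_cases hmc : m < i + c
  · rw [if_pos hmc]
  · rw [if_neg hmc]
    have hm' : m = i + c := by omega
    subst hm'
    rw [show i + c - c = i by omega, hB i le_rfl, hvv]

variable (σ : A.Strategy) (v : V)

/-- outcomes of the surgered strategy that deviate from `π` on `[0, i]` are
outcomes of the original strategy -/
lemma outcome_of_dev (ρ : ℕ → V) (hρ : A.IsOutcome (cutStrat π i c σ) v ρ)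
    (hdev : ∃ k, k ≤ i ∧ ρ k ≠ π k) : A.IsOutcome σ v ρ := by
  obtain ⟨h0, hpl, hst⟩ := hρ
  refine ⟨h0, hpl, fun n hn => ?_⟩
  have := hst n hn
  rw [this]
  show (if cond π i (hist ρ n) (ρ n) then _ else _) = _
  rw [if_neg]
  rw [cond_hist]
  rintro ⟨hin, hk⟩
  obtain ⟨k, hki, hkne⟩ := hdev
  exact hkne (hk k hki)

/-- outcomes of the surgered strategy that agree with `π` on `[0, i]` give rise
to outcomes of the original strategy by reinserting the cycle -/
lemma hat_outcome (hvv : π i = π (i + c)) (hπ : A.IsOutcome σ v π)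
    (ρ : ℕ → V) (hρ : A.IsOutcome (cutStrat π i c σ) v ρ)
    (hB : ∀ k ≤ i, ρ k = π k) : A.IsOutcome σ v (hatPlay π i c ρ) := by
  obtain ⟨h0, hpl, hst⟩ := hρ
  obtain ⟨h0', hpl', hst'⟩ := hπ
  refine ⟨?_, ?_, ?_⟩
  · rw [hat_prefix π i c hvv ρ hB (by omega)]
    exact h0'
  · intro n
    by_cases hn : n + 1 ≤ i + c
    · rw [hat_prefix π i c hvv ρ hB (by omega), hat_prefix π i c hvv ρ hB hn]
      exact hpl' n
    · have hn' : i + c ≤ n := by omega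
      have e1 : hatPlay π i c ρ n = ρ (n - c) := by
        have := hat_cut π i c ρ (show i ≤ n - c by omega)
        rwa [show n - c + c = n by omega] at this
      have e2 : hatPlay π i c ρ (n + 1) = ρ (n - c + 1) := by
        have := hat_cut π i c ρ (show i ≤ n - c + 1 by omega)
        rwa [show n - c + 1 + c = n + 1 by omega] at this
      rw [e1, e2]
      exact hpl (n - c)
  · intro n hn
    by_cases hnc : n < i + c
    · have e1 : hatPlay π i c ρ n = π n := hat_prefix π i c hvv ρ hB (by omega)
      have e2 : hatPlay π i c ρ (n + 1) = π (n + 1) := hat_prefix π i c hvv ρ hB (by omega)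
      have e3 : hist (hatPlay π i c ρ) n = hist π n := by
        apply hist_congr
        intro k hk
        exact hat_prefix π i c hvv ρ hB (by omega)
      rw [e2]
      show π (n + 1) = σ.act (hist (hatPlay π i c ρ) n) (hatPlay π i c ρ n)
      rw [e3, e1]
      exact hst' n (by rwa [e1] at hn)
    · have hn' : i + c ≤ n := by omega
      set m := n - c with hm
      have hmn : n = m + c := by omega
      have him : i ≤ m := by omega
      have e1 : hatPlay π i c ρ n = ρ m := by rw [hmn]; exact hat_cut π i c ρ him
      have e2 : hatPlay π i c ρ (n + 1) = ρ (m + 1) := by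
        have := hat_cut π i c ρ (show i ≤ m + 1 by omega)
        rwa [show m + 1 + c = n + 1 by omega] at this
      rw [e1, e2]
      have := hst m (by rwa [e1] at hn)
      rw [this]
      show (if cond π i (hist ρ m) (ρ m) then _ else _) = _
      rw [if_pos ((cond_hist π i ρ m).2 ⟨him, hB⟩)]
      show σ.act (hist π (i + c) ++ (hist ρ m).drop i) (ρ m) = _
      rw [translate_eq π i c ρ him, ← hmn]
      rfl

lemma cut_prefix (hvv : π i = π (i + c)) : ∀ k ≤ i, cutPlay π i c k = π k := by
  intro k hk
  simp only [cutPlay]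
  by_cases hki : k < i
  · rw [if_pos hki]
  · rw [if_neg hki, show k = i by omega, ← hvv]

lemma hat_cut_self (hvv : π i = π (i + c)) : hatPlay π i c (cutPlay π i c) = π := by
  funext m
  by_cases hm : m < i + c
  · simp [hatPlay, hm]
  · simp only [hatPlay, cutPlay]
    rw [if_neg hm, if_neg (by omega : ¬ (m - c < i)), show m - c + c = m by omega]

/-- the cut play is an outcome of the surgered strategy -/
lemma cut_outcome (hvv : π i = π (i + c)) (hπ : A.IsOutcome σ v π) :
    A.IsOutcome (cutStrat π i c σ) v (cutPlay π i c) := by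
  obtain ⟨h0', hpl', hst'⟩ := hπ
  refine ⟨by rw [cut_prefix π i c hvv 0 (by omega)]; exact h0', ?_, ?_⟩
  · intro n
    by_cases hn : n < i
    · rw [cut_prefix π i c hvv n (by omega), cut_prefix π i c hvv (n+1) (by omega)]
      exact hpl' n
    · have e1 : cutPlay π i c n = π (n + c) := by simp [cutPlay, hn]
      have e2 : cutPlay π i c (n + 1) = π (n + c + 1) := by
        simp only [cutPlay]; rw [if_neg (by omega)]; congr 1; omega
      rw [e1, e2]
      exact hpl' (n + c)
  · intro n hn
    by_cases hni : n < i
    · have e1 : cutPlay π i c n = π n := cut_prefix π i c hvv n (by omega)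
      have e2 : cutPlay π i c (n + 1) = π (n + 1) := cut_prefix π i c hvv (n+1) (by omega)
      have e3 : hist (cutPlay π i c) n = hist π n := by
        apply hist_congr
        intro k hk
        exact cut_prefix π i c hvv k (by omega)
      rw [e2]
      show π (n + 1) = (cutStrat π i c σ).act (hist (cutPlay π i c) n) (cutPlay π i c n)
      show π (n + 1) = (if cond π i (hist (cutPlay π i c) n) (cutPlay π i c n) then _ else _)
      rw [e3, e1]
      rw [if_neg (by rw [← e1, ← e3, cond_hist]; omega)]
      exact hst' n (by rwa [e1] at hn)
    · have hni' : i ≤ n := by omega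
      have e1 : cutPlay π i c n = π (n + c) := by simp [cutPlay, hni]
      have e2 : cutPlay π i c (n + 1) = π (n + c + 1) := by
        simp only [cutPlay]; rw [if_neg (by omega)]; congr 1; omega
      show cutPlay π i c (n + 1) =
        (if cond π i (hist (cutPlay π i c) n) (cutPlay π i c n) then
          σ.act (hist π (i + c) ++ (hist (cutPlay π i c) n).drop i) (cutPlay π i c n)
         else σ.act (hist (cutPlay π i c) n) (cutPlay π i c n))
      rw [if_pos ((cond_hist π i (cutPlay π i c) n).2 ⟨hni', cut_prefix π i c hvv⟩),
        translate_eq π i c (cutPlay π i c) hni', hat_cut_self π i c hvv, e1, e2]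
      exact hst' (n + c) (by rwa [e1] at hn)

end Cut

section Transfer

variable {A : ArenaZ V} (lam : ℤ)

/-- assemble `DirBWMP` from a uniformly-windowed tail and finitely many
individually-closing prefix windows -/
lemma dirBWMP_assemble (ρ : ℕ → V) (i : ℕ)
    (htail : ∃ ℓ₀, 1 ≤ ℓ₀ ∧ ∀ p, i ≤ p → ∃ d : ℕ, 1 ≤ d ∧ d ≤ ℓ₀ ∧ lam * (d : ℤ) ≤ A.winSum ρ p d)
    (hpre : ∀ p < i, ∃ d : ℕ, 1 ≤ d ∧ lam * (d : ℤ) ≤ A.winSum ρ p d) :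
    A.DirBWMP lam ρ := by
  obtain ⟨ℓ₀, hℓ₀, htail⟩ := htail
  set g : ℕ → ℕ := fun p => if h : p < i then (hpre p h).choose else 1 with hg
  refine ⟨max ℓ₀ ((Finset.range i).sup g), le_trans hℓ₀ (le_max_left _ _), fun p => ?_⟩
  by_cases hp : p < i
  · obtain ⟨hd1, hds⟩ := (hpre p hp).choose_spec
    refine ⟨(hpre p hp).choose, hd1, ?_, hds⟩
    refine le_trans ?_ (le_max_right _ _)
    have : g p = (hpre p hp).choose := by rw [hg]; simp [hp]
    rw [← this]
    exact Finset.le_sup (Finset.mem_range.2 hp)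
  · obtain ⟨d, hd1, hdl, hds⟩ := htail p (by omega)
    exact ⟨d, hd1, le_trans hdl (le_max_left _ _), hds⟩

variable (π : ℕ → V) (i c : ℕ)

lemma hat_agree_low (hc : 1 ≤ c) (ρ : ℕ → V) (hB : ∀ k ≤ i, ρ k = π k)
    {m : ℕ} (hm : m ≤ i) : hatPlay π i c ρ m = ρ m := by
  simp only [hatPlay]
  rw [if_pos (by omega), ← hB m hm]

/-- transfer `DirBWMP` from the reinserted play to the cut play -/
lemma transfer (hc : 1 ≤ c) (ρ : ℕ → V) (hB : ∀ k ≤ i, ρ k = π k)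
    (hhat : A.DirBWMP lam (hatPlay π i c ρ))
    (hpre : ∀ p < i, ∃ d : ℕ, 1 ≤ d ∧ lam * (d : ℤ) ≤ A.winSum ρ p d) :
    A.DirBWMP lam ρ := by
  obtain ⟨ℓ, hℓ, hF⟩ := hhat
  refine dirBWMP_assemble lam ρ i ⟨ℓ, hℓ, fun p hp => ?_⟩ hpre
  obtain ⟨d, hd1, hdl, hds⟩ := hF (p + c)
  refine ⟨d, hd1, hdl, ?_⟩
  have hsh : A.winSum ρ p d = A.winSum (hatPlay π i c ρ) (p + c) d :=
    winSum_shift A (fun k _ => by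
      rw [show p + c + k = (p + k) + c by ring, hat_cut π i c ρ (by omega)])
  rwa [← hsh] at hds

/-- prefix windows close in the cut play: negative-cycle case -/
lemma preA (hc : 1 ≤ c) (hvv : π i = π (i + c)) (ρ : ℕ → V) (hB : ∀ k ≤ i, ρ k = π k)
    (hhat : A.DirBWMP lam (hatPlay π i c ρ))
    (hcyc : A.winSum π i c ≤ lam * (c : ℤ)) :
    ∀ p < i, ∃ d : ℕ, 1 ≤ d ∧ lam * (d : ℤ) ≤ A.winSum ρ p d := by
  intro p hp
  obtain ⟨ℓ, hℓ, hF⟩ := hhat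
  set q := i - p with hq
  obtain ⟨D, hD1, hD2⟩ := exists_big_window A hF p (q + c + 1)
  set d := D - c with hd
  set r := d - q with hr
  have hpq : p + q = i := by omega
  have hDsplit : D = q + (c + r) := by omega
  have hdsplit : d = q + r := by omega
  refine ⟨d, by omega, ?_⟩
  have A1 : A.winSum (hatPlay π i c ρ) p D =
      A.winSum (hatPlay π i c ρ) p q + A.winSum (hatPlay π i c ρ) i c
        + A.winSum (hatPlay π i c ρ) (i + c) r := by
    rw [hDsplit, winSum_add, winSum_add, hpq, add_assoc]
  have A2 : A.winSum ρ p d = A.winSum ρ p q + A.winSum ρ i r := by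
    rw [hdsplit, winSum_add, hpq]
  have B1 : A.winSum ρ p q = A.winSum (hatPlay π i c ρ) p q :=
    winSum_shift A (fun k hk => (hat_agree_low π i c hc ρ hB (by omega)).symm)
  have B2 : A.winSum ρ i r = A.winSum (hatPlay π i c ρ) (i + c) r :=
    winSum_shift A (fun k _ => by
      rw [show i + c + k = (i + k) + c by ring, hat_cut π i c ρ (by omega)])
  have B3 : A.winSum (hatPlay π i c ρ) i c = A.winSum π i c :=
    winSum_shift A (fun k hk => hat_prefix π i c hvv ρ hB (by omega))
  have hcast : (D : ℤ) = (d : ℤ) + (c : ℤ) := by exact_mod_cast congrArg Nat.cast (by omega : D = d + c)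
  have := hD2
  rw [A1, B3, hcast, mul_add] at this
  rw [A2, B1, B2]
  linarith [this, hcyc]

/-- prefix windows close in the cut play: fresh-position case -/
lemma preB (ρ : ℕ → V) (hB : ∀ k ≤ i, ρ k = π k)
    (hfresh : ∀ q < i, ∃ d : ℕ, 1 ≤ d ∧ q + d ≤ i ∧ lam * (d : ℤ) ≤ A.winSum π q d) :
    ∀ p < i, ∃ d : ℕ, 1 ≤ d ∧ lam * (d : ℤ) ≤ A.winSum ρ p d := by
  intro p hp
  obtain ⟨d, hd1, hdi, hds⟩ := hfresh p hp
  have hsh : A.winSum ρ p d = A.winSum π p d :=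
    winSum_shift A (fun k hk => (hB (p + k) (by omega)))
  exact ⟨d, hd1, by rwa [hsh]⟩

/-- the combined surgery step -/
lemma step_main (σ : A.Strategy) (v : V)
    (hAll : ∀ ρ : ℕ → V, A.IsOutcome σ v ρ → A.DirBWMP lam ρ)
    (hπ : A.IsOutcome σ v π) (hc : 1 ≤ c) (hvv : π i = π (i + c))
    (hgood : A.winSum π i c ≤ lam * (c : ℤ) ∨
      (∀ q < i, ∃ d : ℕ, 1 ≤ d ∧ q + d ≤ i ∧ lam * (d : ℤ) ≤ A.winSum π q d)) :
    ∃ σ' : A.Strategy,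
      (∀ ρ : ℕ → V, A.IsOutcome σ' v ρ → A.DirBWMP lam ρ) ∧
      A.IsOutcome σ' v (cutPlay π i c) := by
  refine ⟨cutStrat π i c σ, fun ρ hρ => ?_, cut_outcome π i c σ v hvv hπ⟩
  by_cases hB : ∀ k ≤ i, ρ k = π k
  · have hhat : A.DirBWMP lam (hatPlay π i c ρ) :=
      hAll _ (hat_outcome π i c σ v hvv hπ ρ hρ hB)
    refine transfer lam π i c hc ρ hB hhat ?_
    rcases hgood with hcyc | hfresh
    · exact preA lam π i c hc hvv ρ hB hhat hcyc
    · exact preB lam π i ρ hB hfresh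
  · push_neg at hB
    obtain ⟨k, hk1, hk2⟩ := hB
    exact hAll ρ (outcome_of_dev π i c σ v ρ hρ ⟨k, hk1, hk2⟩)

end Transfer

section Bound

variable {A : ArenaZ V} (lam : ℤ)

/-- deviation prefix sums -/
noncomputable def tdev (A : ArenaZ V) (lam : ℤ) (π : ℕ → V) : ℕ → ℤ :=
  fun m => A.winSum π 0 m - lam * m

lemma tdev_split (π : ℕ → V) {p q : ℕ} (hpq : p ≤ q) :
    tdev A lam π q - tdev A lam π p = A.winSum π p (q - p) - lam * ((q - p : ℕ) : ℤ) := by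
  unfold tdev
  have h1 : A.winSum π 0 q = A.winSum π 0 p + A.winSum π p (q - p) := by
    have := winSum_add A π 0 p (q - p)
    rwa [show p + (q - p) = q by omega, show 0 + p = p by omega] at this
  have h2 : ((q : ℤ)) = (p : ℤ) + ((q - p : ℕ) : ℤ) := by
    push_cast [Nat.cast_sub hpq]; ring
  rw [h1, h2]
  ring

variable [Fintype V]

lemma edge_dev_bound (π : ℕ → V) (hpl : A.IsPlay π) (p : ℕ) :
    -(A.maxDev lam : ℤ) ≤ tdev A lam π (p + 1) - tdev A lam π p ∧
      tdev A lam π (p + 1) - tdev A lam π p ≤ (A.maxDev lam : ℤ) := by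
  have h1 : tdev A lam π (p + 1) - tdev A lam π p = A.w (π p) (π (p + 1)) - lam := by
    have := tdev_split (A := A) lam π (show p ≤ p + 1 by omega)
    rw [show p + 1 - p = 1 by omega] at this
    rw [this]
    simp [ArenaZ.winSum]
  have h2 : (A.w (π p) (π (p + 1)) - lam).natAbs ≤ A.maxDev lam := by
    have hle := Finset.le_sup (f := fun e : V × V =>
      if A.E e.1 e.2 then (A.w e.1 e.2 - lam).natAbs else 0)
      (Finset.mem_univ (π p, π (p + 1)))
    unfold ArenaZ.maxDev
    simpa [hpl p] using hle
  have h3 : |A.w (π p) (π (p + 1)) - lam| ≤ (A.maxDev lam : ℤ) := by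
    rw [Int.abs_eq_natAbs]
    exact_mod_cast h2
  rw [h1]
  constructor <;> [linarith [neg_abs_le (A.w (π p) (π (p + 1)) - lam)];
    linarith [le_abs_self (A.w (π p) (π (p + 1)) - lam)]]

/-- depth lemma: in a VSI prefix, the deviation never drops more than `n·W`
below its value at any earlier position -/
lemma depth_lemma (π : ℕ → V) (hpl : A.IsPlay π) (N : ℕ)
    (VSI : ∀ p q : ℕ, p < q → q ≤ N → π p = π q → tdev A lam π p < tdev A lam π q)
    (a : ℕ) :
    ∀ p : ℕ, a ≤ p → p ≤ N →
      tdev A lam π a - (Fintype.card V : ℤ) * (A.maxDev lam : ℤ) ≤ tdev A lam π p := by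
  have key : ∀ p : ℕ, a ≤ p → p ≤ N →
      tdev A lam π a - (((Finset.Icc a p).image π).card : ℤ) * (A.maxDev lam : ℤ)
        ≤ tdev A lam π p := by
    intro p
    induction p using Nat.strong_induction_on with
    | _ p IH =>
      intro hap hpN
      rcases Nat.eq_or_lt_of_le hap with heq | hlt
      · subst heq
        have : (0 : ℤ) ≤ (((Finset.Icc a a).image π).card : ℤ) * (A.maxDev lam : ℤ) := by
          positivity
        linarith
      · obtain ⟨m, rfl⟩ : ∃ m, p = m + 1 := ⟨p - 1, by omega⟩
        have ham : a ≤ m := by omega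
        by_cases hrev : ∃ q, a ≤ q ∧ q ≤ m ∧ π q = π (m + 1)
        · obtain ⟨q, haq, hqm, hqe⟩ := hrev
          have hVSI := VSI q (m + 1) (by omega) hpN hqe
          have hIH := IH q (by omega) haq (by omega)
          have hsub : ((Finset.Icc a q).image π).card ≤ ((Finset.Icc a (m + 1)).image π).card := by
            apply Finset.card_le_card
            apply Finset.image_subset_image
            exact Finset.Icc_subset_Icc_right (by omega)
          have : (((Finset.Icc a q).image π).card : ℤ) * (A.maxDev lam : ℤ)
              ≤ (((Finset.Icc a (m + 1)).image π).card : ℤ) * (A.maxDev lam : ℤ) := by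
            apply mul_le_mul_of_nonneg_right _ (by positivity)
            exact_mod_cast hsub
          linarith
        · push_neg at hrev
          have hnot : π (m + 1) ∉ (Finset.Icc a m).image π := by
            intro hmem
            obtain ⟨q, hq, hqe⟩ := Finset.mem_image.1 hmem
            rw [Finset.mem_Icc] at hq
            exact hrev q hq.1 hq.2 hqe
          have hins : (Finset.Icc a (m + 1)).image π
              = insert (π (m + 1)) ((Finset.Icc a m).image π) := by
            rw [show Finset.Icc a (m + 1) = insert (m + 1) (Finset.Icc a m) from
              (Finset.insert_Icc_right_eq_Icc_add_one (by omega)).symm, Finset.image_insert]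
          have hcard : ((Finset.Icc a (m + 1)).image π).card
              = ((Finset.Icc a m).image π).card + 1 := by
            rw [hins, Finset.card_insert_of_notMem hnot]
          have hIH := IH m (by omega) ham (by omega)
          have hedge := (edge_dev_bound lam π hpl m).1
          rw [hcard]
          push_cast
          linarith
  intro p hap hpN
  have hcardle : ((Finset.Icc a p).image π).card ≤ Fintype.card V :=
    Finset.card_le_univ _
  have : (((Finset.Icc a p).image π).card : ℤ) * (A.maxDev lam : ℤ)
      ≤ (Fintype.card V : ℤ) * (A.maxDev lam : ℤ) := by
    apply mul_le_mul_of_nonneg_right _ (by positivity)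
    exact_mod_cast hcardle
  linarith [key p hap hpN]

end Bound

section Fresh

variable {A : ArenaZ V} (lam : ℤ) [Fintype V] [Nonempty V]

lemma exists_fresh_pair (π : ℕ → V) (hpl : A.IsPlay π) (hBW : A.DirBWMP lam π) (N : ℕ)
    (hN : Fintype.card V ^ 2 * (Fintype.card V * A.maxDev lam + 1) < N)
    (VSI : ∀ p q : ℕ, p < q → q ≤ N → π p = π q → tdev A lam π p < tdev A lam π q) :
    ∃ i c : ℕ, 1 ≤ c ∧ i + c ≤ N ∧ π i = π (i + c) ∧
      (∀ q < i, ∃ d : ℕ, 1 ≤ d ∧ q + d ≤ i ∧ lam * (d : ℤ) ≤ A.winSum π q d) := by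
  classical
  set n := Fintype.card V with hn
  set W := A.maxDev lam with hW
  have hn1 : 1 ≤ n := Fintype.card_pos
  set M := n ^ 2 * W + 1 with hM
  have hnM : n * M ≤ n ^ 2 * (n * W + 1) := by rw [hM]; nlinarith
  have Hex : ∀ m : ℕ, ∃ d : ℕ, 1 ≤ d ∧ lam * (d : ℤ) ≤ A.winSum π m d := by
    obtain ⟨ℓ, hℓ, hF⟩ := hBW
    intro m; obtain ⟨d, h1, _, h3⟩ := hF m; exact ⟨d, h1, h3⟩
  obtain ⟨f, hf1, hfs, hfmin⟩ : ∃ f : ℕ → ℕ, (∀ m, 1 ≤ f m) ∧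
      (∀ m, lam * ((f m : ℕ) : ℤ) ≤ A.winSum π m (f m)) ∧
      (∀ m e, 1 ≤ e → e < f m → A.winSum π m e < lam * (e : ℤ)) := by
    refine ⟨fun m => Nat.find (Hex m), fun m => (Nat.find_spec (Hex m)).1,
      fun m => (Nat.find_spec (Hex m)).2, ?_⟩
    intro m e h1 h2
    have := Nat.find_min (Hex m) h2
    push_neg at this
    exact this h1
  obtain ⟨b, hb0, hbs⟩ : ∃ b : ℕ → ℕ, b 0 = 0 ∧ ∀ k, b (k + 1) = b k + f (b k) :=
    ⟨fun k => Nat.rec 0 (fun _ bk => bk + f bk) k, rfl, fun k => rfl⟩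
  have hbmono : StrictMono b := strictMono_nat_of_lt_succ (fun k => by
    have := hf1 (b k); rw [hbs]; omega)
  -- freshness at boundaries
  have Fr : ∀ k, ∀ q < b k, ∃ d : ℕ, 1 ≤ d ∧ q + d ≤ b k ∧ lam * (d : ℤ) ≤ A.winSum π q d := by
    intro k
    induction k with
    | zero => intro q hq; rw [hb0] at hq; omega
    | succ k IH =>
      intro q hq
      rw [hbs] at hq
      by_cases hqk : q < b k
      · obtain ⟨d, h1, h2, h3⟩ := IH q hqk
        exact ⟨d, h1, by rw [hbs]; omega, h3⟩
      · have hbkq : b k ≤ q := by omega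
        set e := q - b k with he
        set d := b k + f (b k) - q with hd
        have hdq : 1 ≤ d := by omega
        have hed : e + d = f (b k) := by omega
        refine ⟨d, hdq, by rw [hbs]; omega, ?_⟩
        have hsplit : A.winSum π (b k) (f (b k)) = A.winSum π (b k) e + A.winSum π q d := by
          rw [← hed, winSum_add, show b k + e = q by omega]
        have hcast : ((f (b k) : ℕ) : ℤ) = (e : ℤ) + (d : ℤ) := by
          exact_mod_cast congrArg (Nat.cast : ℕ → ℤ) hed.symm
        by_cases he0 : e = 0
        · have hq' : q = b k := by omega
          have hd' : d = f (b k) := by omega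
          rw [hq', hd']; exact hfs (b k)
        · have hemin := hfmin (b k) e (by omega) (by omega)
          have hbig := hfs (b k)
          rw [hsplit, hcast, mul_add] at hbig
          linarith
  -- growth bound
  have hgrow : ∀ k ≤ n, b k ≤ k * M := by
    intro k
    induction k with
    | zero => intro _; rw [hb0]; omega
    | succ k IH =>
      intro hk
      have hbk := IH (by omega)
      have hstep : f (b k) ≤ M := by
        by_contra hbig
        push_neg at hbig
        have hub : b k + M ≤ N := by
          have h1 : b k + M ≤ k * M + M := Nat.add_le_add_right hbk M
          have h2 : k * M + M = (k + 1) * M := by ring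
          have h3 : (k + 1) * M ≤ n * M := Nat.mul_le_mul_right M hk
          omega
        -- counting argument
        set t0 := tdev A lam π (b k) with ht0
        have hmaps : ∀ p ∈ Finset.Ico (b k + 1) (b k + (M + 1)),
            (π p, tdev A lam π p) ∈
              Finset.univ ×ˢ Finset.Icc (t0 - ((n * W : ℕ) : ℤ)) (t0 - 1) := by
          intro p hp
          rw [Finset.mem_Ico] at hp
          have hpN : p ≤ N := by omega
          have hup : tdev A lam π p ≤ t0 - 1 := by
            have hsp := tdev_split (A := A) lam π (show b k ≤ p by omega)
            have hmin := hfmin (b k) (p - b k) (by omega) (by omega)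
            have : tdev A lam π p < t0 := by rw [ht0]; linarith
            linarith [Int.add_one_le_iff.2 this]
          have hlow : t0 - ((n * W : ℕ) : ℤ) ≤ tdev A lam π p := by
            have := depth_lemma lam π hpl N VSI (b k) p (by omega) hpN
            rw [← ht0] at this
            have hc : ((n * W : ℕ) : ℤ) = (n : ℤ) * (W : ℤ) := by push_cast; ring
            rw [hc]
            exact this
          rw [Finset.mem_product, Finset.mem_Icc]
          exact ⟨Finset.mem_univ _, hlow, hup⟩
        have hinj : Set.InjOn (fun p => (π p, tdev A lam π p))
            (Finset.Ico (b k + 1) (b k + (M + 1))) := by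
          intro p hp q hq hpq
          simp only [Finset.coe_Ico, Set.mem_Ico] at hp hq
          have hpeq : π p = π q := congrArg Prod.fst hpq
          have hteq : tdev A lam π p = tdev A lam π q := congrArg Prod.snd hpq
          by_contra hne
          have hpN : p ≤ N := by omega
          have hqN : q ≤ N := by omega
          rcases Nat.lt_or_ge p q with h | h
          · exact absurd hteq (ne_of_lt (VSI p q h hqN hpeq))
          · have h' : q < p := by omega
            exact absurd hteq.symm (ne_of_lt (VSI q p h' hpN hpeq.symm))
        have hcard := Finset.card_le_card_of_injOn _ hmaps hinj
        rw [Nat.card_Ico] at hcard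
        rw [Finset.card_product, Finset.card_univ, Int.card_Icc] at hcard
        have hIcc : (t0 - 1 + 1 - (t0 - ((n * W : ℕ) : ℤ))).toNat = n * W := by
          rw [show t0 - 1 + 1 - (t0 - ((n * W : ℕ) : ℤ)) = ((n * W : ℕ) : ℤ) by ring]
          exact Int.toNat_natCast _
        rw [hIcc, ← hn] at hcard
        have : b k + (M + 1) - (b k + 1) = M := by omega
        rw [this] at hcard
        have hMW : n * (n * W) = n ^ 2 * W := by ring
        omega
      rw [hbs]
      have : (k + 1) * M = k * M + M := by ring
      omega
  -- pigeonhole on boundaries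
  have hbN : ∀ k ≤ n, b k ≤ N := by
    intro k hk
    have h1 := hgrow k hk
    have h3 : k * M ≤ n * M := Nat.mul_le_mul_right M hk
    omega
  have key : ∀ k m : ℕ, k < m → m ≤ n → π (b k) = π (b m) →
      ∃ i c : ℕ, 1 ≤ c ∧ i + c ≤ N ∧ π i = π (i + c) ∧
        (∀ q < i, ∃ d : ℕ, 1 ≤ d ∧ q + d ≤ i ∧ lam * (d : ℤ) ≤ A.winSum π q d) := by
    intro k m hkm hmn heq
    have hbb : b k < b m := hbmono hkm
    refine ⟨b k, b m - b k, by omega, by rw [show b k + (b m - b k) = b m by omega]; exact hbN m hmn, ?_, ?_⟩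
    · rw [show b k + (b m - b k) = b m by omega]; exact heq
    · exact Fr k
  obtain ⟨k, hk, m, hm, hkm, heq⟩ := Finset.exists_ne_map_eq_of_card_lt_of_maps_to
    (s := Finset.range (n + 1)) (t := (Finset.univ : Finset V))
    (by rw [Finset.card_range, Finset.card_univ]; omega)
    (fun k _ => Finset.mem_univ (π (b k)))
  rw [Finset.mem_range] at hk hm
  rcases Ne.lt_or_gt hkm with h | h
  · exact key k m h (by omega) heq
  · exact key m k h (by omega) heq.symm

end Fresh
end CutProof

/-- If Player 1 has a strategy from `v` whose outcomes all satisfy `DirBWMP(λ)`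
and some outcome visits `T`, then Player 1 has such a strategy where some
outcome visits `T` within the first `|V|²·(|V|·W_λ + 1)` steps. -/
theorem sure_dirbwmp_positive_reach_bounded
    {V : Type*} [Fintype V] [Nonempty V] (A : ArenaZ V) (lam : ℤ) (T : Set V) (v : V)
    (h : ∃ σ : A.Strategy,
      (∀ π : ℕ → V, A.IsOutcome σ v π → A.DirBWMP lam π) ∧
      (∃ π : ℕ → V, A.IsOutcome σ v π ∧ ∃ n : ℕ, π n ∈ T)) :
    ∃ σ' : A.Strategy,
      (∀ π : ℕ → V, A.IsOutcome σ' v π → A.DirBWMP lam π) ∧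
      (∃ π : ℕ → V, A.IsOutcome σ' v π ∧
        ∃ n : ℕ, n ≤ Fintype.card V ^ 2 * (Fintype.card V * A.maxDev lam + 1) ∧ π n ∈ T) := by
  classical
  obtain ⟨σ₀, hAll₀, π₀, hout₀, n₀, hT₀⟩ := h
  set B := Fintype.card V ^ 2 * (Fintype.card V * A.maxDev lam + 1) with hB
  have hex : ∃ N : ℕ, ∃ σ : A.Strategy,
      (∀ π : ℕ → V, A.IsOutcome σ v π → A.DirBWMP lam π) ∧
      (∃ π : ℕ → V, A.IsOutcome σ v π ∧ π N ∈ T) :=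
    ⟨n₀, σ₀, hAll₀, π₀, hout₀, hT₀⟩
  set N := Nat.find hex with hN
  obtain ⟨σ, hAll, π, hout, hT⟩ := Nat.find_spec hex
  by_cases hNB : N ≤ B
  · exact ⟨σ, hAll, π, hout, N, hNB, hT⟩
  push_neg at hNB
  exfalso
  have contra : ∀ i c : ℕ, 1 ≤ c → i + c ≤ N → π i = π (i + c) →
      (A.winSum π i c ≤ lam * (c : ℤ) ∨
        (∀ q < i, ∃ d : ℕ, 1 ≤ d ∧ q + d ≤ i ∧ lam * (d : ℤ) ≤ A.winSum π q d)) → False := by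
    intro i c hc hicN hvv hgood
    obtain ⟨σ', hAll', hout'⟩ := CutProof.step_main lam π i c σ v hAll hout hc hvv hgood
    have hhit : CutProof.cutPlay π i c (N - c) = π N := by
      show (if N - c < i then π (N - c) else π (N - c + c)) = π N
      rw [if_neg (by omega), show N - c + c = N by omega]
    exact Nat.find_min hex (show N - c < N by omega)
      ⟨σ', hAll', CutProof.cutPlay π i c, hout', by rw [hhit]; exact hT⟩
  by_cases hcyc : ∃ p q : ℕ, p < q ∧ q ≤ N ∧ π p = π q ∧
      A.winSum π p (q - p) ≤ lam * (((q - p : ℕ)) : ℤ)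
  · obtain ⟨p, q, hpq, hqN, hvv, hle⟩ := hcyc
    exact contra p (q - p) (by omega) (by omega)
      (by rw [show p + (q - p) = q by omega]; exact hvv) (Or.inl hle)
  · push_neg at hcyc
    have VSI : ∀ p q : ℕ, p < q → q ≤ N → π p = π q →
        CutProof.tdev A lam π p < CutProof.tdev A lam π q := by
      intro p q h1 h2 h3
      have hlt := hcyc p q h1 h2 h3
      have hsp := CutProof.tdev_split (A := A) lam π (le_of_lt h1)
      linarith
    have hpl : A.IsPlay π := hout.2.1
    obtain ⟨i, c, hc, hicN', hvv, hfresh⟩ :=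
      CutProof.exists_fresh_pair lam π hpl (hAll π hout) N hNB VSI
    exact contra i c hc hicN' hvv (Or.inr hfresh)
end

section
/- Let (V, E, V_□, V_◇, w) be a finite arena with integer payoffs w : E → ℤ, let w_max = max_{e ∈ E} |w(e)|, and let ℓ' = |V|·(|V|·w_max + 1). Then every vertex of the arena is sure-winning for DirBWMP(0) if and only if every vertex of the arena is sure-winning for DirFWMP(ℓ', 0). -/
open scoped Classical

/-!
Write `Forces t c v` when Player 1 can force, from `v`, a prefix of between `1` and `t` edges
with total payoff at least `c`. If every vertex sure-wins `DirBWMP(0)`, then every `v` satisfies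
`Forces t 0 v` for some `t`: otherwise the opponent keeps every prefix sum from `v` negative.
Along a play realising the least such horizon `T`, the remaining debt `c` strictly drops between
two visits of the same vertex, so it stays in `[0, |V|·w_max]` and the `T` pairs
`(vertex, debt)` are pairwise distinct: `T ≤ |V|·(|V|·w_max + 1)`. Conversely, if `Forces ℓ 0 v`
holds everywhere, Player 1 wins `DirFWMP(ℓ, 0)` by tracking the debt and age of the currently
open window and always moving where that debt can still be paid within the remaining steps.
-/

namespace ArenaZ

variable {V : Type*} {A : ArenaZ V}

variable (A) in
def Forces : ℕ → ℤ → V → Prop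
  | 0, _, _ => False
  | t + 1, c, v =>
      (v ∈ A.P1 → ∃ u, A.E v u ∧ (c ≤ A.w v u ∨ Forces t (c - A.w v u) u)) ∧
      (v ∉ A.P1 → ∀ u, A.E v u → c ≤ A.w v u ∨ Forces t (c - A.w v u) u)

theorem not_forces_zero (c : ℤ) (v : V) : ¬A.Forces 0 c v := id

theorem Forces.mono {t t' : ℕ} {c c' : ℤ} {v : V} (ht : t ≤ t') (hc : c' ≤ c)
    (h : A.Forces t c v) : A.Forces t' c' v := by
  induction t generalizing t' c c' v with
  | zero => exact h.elim
  | succ t ih =>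
    obtain ⟨s, rfl⟩ : ∃ s, t' = s + 1 := ⟨t' - 1, by omega⟩
    have step : ∀ u, c ≤ A.w v u ∨ A.Forces t (c - A.w v u) u →
        c' ≤ A.w v u ∨ A.Forces s (c' - A.w v u) u :=
      fun u => Or.imp hc.trans (ih (by omega) (by omega))
    exact ⟨fun hv => (h.1 hv).imp fun u => And.imp_right (step u),
      fun hv u hu => step u (h.2 hv u hu)⟩

theorem Forces.exists_succ_of_not_forces {s : ℕ} {c : ℤ} {u : V} (h : A.Forces (s + 2) c u)
    (hmin : ¬A.Forces (s + 1) c u) :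
    ∃ u', A.E u u' ∧ A.w u u' < c ∧ A.Forces (s + 1) (c - A.w u u') u' ∧
      ¬A.Forces s (c - A.w u u') u' := by
  by_cases hu : u ∈ A.P1
  · obtain ⟨u', huu', hmove⟩ := h.1 hu
    have hlt : A.w u u' < c := by
      by_contra! hle
      exact hmin ⟨fun _ => ⟨u', huu', .inl hle⟩, fun h => (h hu).elim⟩
    exact ⟨u', huu', hlt, hmove.resolve_left hlt.not_ge,
      fun hs => hmin ⟨fun _ => ⟨u', huu', .inr hs⟩, fun h => (h hu).elim⟩⟩
  · by_contra! hall
    refine hmin ⟨fun h => (hu h).elim, fun _ u' huu' => ?_⟩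
    rcases le_or_gt c (A.w u u') with hle | hlt
    · exact .inl hle
    · exact .inr (hall u' huu' hlt ((h.2 hu u' huu').resolve_left hlt.not_ge))

theorem not_forces_succ_of_mem {c : ℤ} {u u' : V} (h : ∀ t, ¬A.Forces t c u) (hu : u ∈ A.P1)
    (huu' : A.E u u') : A.w u u' < c ∧ ∀ t, ¬A.Forces t (c - A.w u u') u' := by
  refine ⟨?_, fun t ht => h (t + 1) ⟨fun _ => ⟨u', huu', .inr ht⟩, fun h => (h hu).elim⟩⟩
  by_contra! hle
  exact h 1 ⟨fun _ => ⟨u', huu', .inl hle⟩, fun h => (h hu).elim⟩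

theorem exists_not_forces_succ_of_notMem [Finite V] {c : ℤ} {u : V}
    (h : ∀ t, ¬A.Forces t c u) (hu : u ∉ A.P1) :
    ∃ u', A.E u u' ∧ A.w u u' < c ∧ ∀ t, ¬A.Forces t (c - A.w u u') u' := by
  have := Fintype.ofFinite V
  by_contra! hall
  choose! τ hτ using hall
  refine h (Finset.univ.sup τ + 1) ⟨fun h => (hu h).elim, fun _ u' huu' => ?_⟩
  rcases le_or_gt c (A.w u u') with hle | hlt
  · exact .inl hle
  · exact .inr ((hτ u' huu' hlt).mono (Finset.le_sup (Finset.mem_univ u')) le_rfl)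

theorem winSum_succ (π : ℕ → V) (i d : ℕ) :
    A.winSum π i (d + 1) = A.winSum π i d + A.w (π (i + d)) (π (i + d + 1)) :=
  Finset.sum_range_succ _ _

theorem winSum_succ' (π : ℕ → V) (i d : ℕ) :
    A.winSum π i (d + 1) = A.w (π i) (π (i + 1)) + A.winSum π (i + 1) d := by
  rw [winSum, Finset.sum_range_succ', add_comm, winSum]
  simp only [Nat.add_zero, Nat.add_right_comm, Nat.add_assoc]

theorem exists_isOutcome_of_invariant {S : Type*} (σ : A.Strategy) (P : V × S → Prop)
    (R : V × S → V × S → Prop) {x₀ : V × S} (h₀ : P x₀)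
    (hP1 : ∀ x, P x → x.1 ∈ A.P1 → ∀ u, A.E x.1 u → ∃ s, R x (u, s) ∧ P (u, s))
    (hP2 : ∀ x, P x → x.1 ∉ A.P1 → ∃ y, A.E x.1 y.1 ∧ R x y ∧ P y) :
    ∃ π : ℕ → V, ∃ st : ℕ → S, A.IsOutcome σ x₀.1 π ∧ st 0 = x₀.2 ∧
      ∀ n, R (π n, st n) (π (n + 1), st (n + 1)) := by
  have hnext : ∀ (h : List V) (x : V × S), P x → ∃ y, A.E x.1 y.1 ∧
      (x.1 ∈ A.P1 → y.1 = σ.act h x.1) ∧ R x y ∧ P y := by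
    intro h x hx
    by_cases hx1 : x.1 ∈ A.P1
    · obtain ⟨s, hR, hP⟩ := hP1 x hx hx1 _ (σ.legal h _ hx1)
      exact ⟨(σ.act h x.1, s), σ.legal h _ hx1, fun _ => rfl, hR, hP⟩
    · obtain ⟨y, hy, hR, hP⟩ := hP2 x hx hx1
      exact ⟨y, hy, fun h => (hx1 h).elim, hR, hP⟩
  choose! next hE hσ hR hP using hnext
  let seq : ℕ → List V × (V × S) := fun n =>
    Nat.rec ([], x₀) (fun _ q => (q.1 ++ [q.2.1], next q.1 q.2)) n
  have hseqP : ∀ n, P (seq n).2 := by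
    intro n
    induction n with
    | zero => exact h₀
    | succ n ih => exact hP _ _ ih
  have hhist : ∀ n, (seq n).1 = List.ofFn fun i : Fin n => (seq i).2.1 := by
    intro n
    induction n with
    | zero => rfl
    | succ n ih =>
      rw [List.ofFn_succ_last]
      exact congrArg (· ++ [(seq n).2.1]) ih
  refine ⟨fun n => (seq n).2.1, fun n => (seq n).2.2,
    ⟨rfl, fun n => hE _ _ (hseqP n), fun n hn => ?_⟩, rfl, fun n => hR _ _ (hseqP n)⟩
  rw [← hhist]
  exact hσ _ _ (hseqP n) hn

theorem exists_forces_of_sureWins_dirBWMP [Finite V] {v : V}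
    (h : A.SureWins {π | A.DirBWMP 0 π} v) : ∃ t, A.Forces t 0 v := by
  by_contra! hv
  obtain ⟨σ, hσ⟩ := h
  obtain ⟨π, debt, hπ, hdebt0, hstep⟩ := exists_isOutcome_of_invariant σ
    (fun x => ∀ t, ¬A.Forces t x.2 x.1)
    (fun x y => A.w x.1 y.1 < x.2 ∧ y.2 = x.2 - A.w x.1 y.1) (x₀ := (v, 0)) hv
    (fun _ hx hx1 _ hu => ⟨_, ⟨(not_forces_succ_of_mem hx hx1 hu).1, rfl⟩,
      (not_forces_succ_of_mem hx hx1 hu).2⟩)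
    (fun _ hx hx1 => by
      obtain ⟨u, hu, hlt, hnot⟩ := exists_not_forces_succ_of_notMem hx hx1
      exact ⟨(u, _), hu, ⟨hlt, rfl⟩, hnot⟩)
  simp only at hπ hdebt0 hstep
  have hsum : ∀ d, A.winSum π 0 d = -debt d := by
    intro d
    induction d with
    | zero => simp [winSum, hdebt0]
    | succ d ih =>
      rw [winSum_succ, ih, (hstep d).2, Nat.zero_add]
      ring
  obtain ⟨ℓ, -, hwin⟩ : A.DirBWMP 0 π := hσ π hπ
  obtain ⟨d, hd, -, hsum_nonneg⟩ := hwin 0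
  obtain ⟨d, rfl⟩ : ∃ d', d = d' + 1 := ⟨d - 1, by omega⟩
  have := hstep d
  rw [hsum] at hsum_nonneg
  omega

theorem natAbs_sub_le_maxDev [Fintype V] {lam : ℤ} {u u' : V} (h : A.E u u') :
    (A.w u u' - lam).natAbs ≤ A.maxDev lam := by
  have := Finset.le_sup (Finset.mem_univ (u, u'))
    (f := fun e : V × V => if A.E e.1 e.2 then (A.w e.1 e.2 - lam).natAbs else 0)
  simpa [h, maxDev] using this

noncomputable def visitedUpTo (p : ℕ → V × ℤ) (n : ℕ) : Finset V :=
  (Finset.range (n + 1)).image fun i => (p i).1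

theorem visitedUpTo_mono {p : ℕ → V × ℤ} {m n : ℕ} (h : m ≤ n) :
    visitedUpTo p m ⊆ visitedUpTo p n :=
  Finset.image_subset_image (Finset.range_subset_range.mpr (by omega))

theorem visitedUpTo_succ (p : ℕ → V × ℤ) (n : ℕ) :
    visitedUpTo p (n + 1) = insert (p (n + 1)).1 (visitedUpTo p n) := by
  rw [visitedUpTo, Finset.range_add_one, Finset.image_insert, visitedUpTo]

variable (A) in
/-- A play prefix of `(vertex, debt)` pairs on which Player 1 pays the debt as fast as possible
and the opponent delays the payment as long as possible. -/
def IsOptimalPath (T : ℕ) (p : ℕ → V × ℤ) : Prop :=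
  (∀ n < T, A.Forces (T - n) (p n).2 (p n).1 ∧ ¬A.Forces (T - n - 1) (p n).2 (p n).1) ∧
    ∀ n, n + 1 < T → A.E (p n).1 (p (n + 1)).1 ∧ A.w (p n).1 (p (n + 1)).1 < (p n).2 ∧
      (p (n + 1)).2 = (p n).2 - A.w (p n).1 (p (n + 1)).1

theorem exists_isOptimalPath {T : ℕ} {c : ℤ} {v : V} (h : A.Forces T c v)
    (hmin : ¬A.Forces (T - 1) c v) : ∃ p, p 0 = (v, c) ∧ A.IsOptimalPath T p := by
  have hstep : ∀ s c u, A.Forces (s + 2) c u → ¬A.Forces (s + 1) c u →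
      ∃ u', A.E u u' ∧ A.w u u' < c ∧ A.Forces (s + 1) (c - A.w u u') u' ∧
        ¬A.Forces s (c - A.w u u') u' :=
    fun _ _ _ => Forces.exists_succ_of_not_forces
  choose! next hnext using hstep
  let p : ℕ → V × ℤ := fun n => Nat.rec (v, c)
    (fun n q => (next (T - n - 2) q.2 q.1, q.2 - A.w q.1 (next (T - n - 2) q.2 q.1))) n
  have hp : ∀ n, p (n + 1) = (next (T - n - 2) (p n).2 (p n).1,
      (p n).2 - A.w (p n).1 (next (T - n - 2) (p n).2 (p n).1)) := fun _ => rfl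
  have hsucc : ∀ n, n + 1 < T → A.Forces (T - n) (p n).2 (p n).1 →
      ¬A.Forces (T - n - 1) (p n).2 (p n).1 →
      A.E (p n).1 (p (n + 1)).1 ∧ A.w (p n).1 (p (n + 1)).1 < (p n).2 ∧
        A.Forces (T - (n + 1)) (p (n + 1)).2 (p (n + 1)).1 ∧
        ¬A.Forces (T - (n + 1) - 1) (p (n + 1)).2 (p (n + 1)).1 := by
    intro n hn h1 h2
    obtain ⟨s, hs⟩ : ∃ s, T - n - 2 = s := ⟨_, rfl⟩
    rw [show T - n = s + 2 by omega] at h1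
    rw [show T - n - 1 = s + 1 by omega] at h2
    rw [hp, hs, show T - (n + 1) = s + 1 by omega, show s + 1 - 1 = s by omega]
    exact hnext s _ _ h1 h2
  have hcrit : ∀ n < T,
      A.Forces (T - n) (p n).2 (p n).1 ∧ ¬A.Forces (T - n - 1) (p n).2 (p n).1 := by
    intro n
    induction n with
    | zero => exact fun _ => ⟨h, hmin⟩
    | succ n ih =>
      intro hn
      obtain ⟨h1, h2⟩ := ih (by omega)
      exact (hsucc n hn h1 h2).2.2
  refine ⟨p, rfl, hcrit, fun n hn => ?_⟩
  obtain ⟨h1, h2⟩ := hcrit n (by omega)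
  obtain ⟨hE, hlt, -⟩ := hsucc n hn h1 h2
  exact ⟨hE, hlt, rfl⟩

namespace IsOptimalPath

variable {T : ℕ} {p : ℕ → V × ℤ}

theorem snd_lt_of_fst_eq (hp : A.IsOptimalPath T p) {m n : ℕ} (hmn : m < n) (hn : n < T)
    (heq : (p m).1 = (p n).1) : (p n).2 < (p m).2 := by
  by_contra! hle
  have := (hp.1 n hn).1.mono (t' := T - m - 1) (by omega) hle
  exact (hp.1 m (by omega)).2 (heq ▸ this)

theorem injOn (hp : A.IsOptimalPath T p) : Set.InjOn p (Set.Iio T) := by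
  intro m hm n hn heq
  by_contra hne
  rcases Nat.lt_or_gt_of_ne hne with hlt | hlt
  · exact (hp.snd_lt_of_fst_eq hlt hn (congrArg Prod.fst heq)).ne (congrArg Prod.snd heq).symm
  · exact (hp.snd_lt_of_fst_eq hlt hm (congrArg Prod.fst heq).symm).ne (congrArg Prod.snd heq)

theorem snd_nonneg (hp : A.IsOptimalPath T p) (h0 : 0 ≤ (p 0).2) {n : ℕ} (hn : n < T) :
    0 ≤ (p n).2 := by
  induction n with
  | zero => exact h0
  | succ n ih =>
    obtain ⟨-, hlt, heq⟩ := hp.2 n hn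
    have := ih (by omega)
    omega

theorem snd_le_card_mul [Fintype V] (hp : A.IsOptimalPath T p) (h0 : (p 0).2 ≤ 0) {n : ℕ}
    (hn : n < T) : (p n).2 ≤ (visitedUpTo p n).card * A.maxDev 0 := by
  induction n using Nat.strong_induction_on with
  | _ n ih =>
  rcases n with _ | n
  · exact h0.trans (by positivity)
  by_cases hmem : (p (n + 1)).1 ∈ visitedUpTo p n
  · obtain ⟨i, hi, heq⟩ := Finset.mem_image.mp hmem
    rw [Finset.mem_range] at hi
    have hlt := hp.snd_lt_of_fst_eq (by omega) hn heq
    have hcard : ((visitedUpTo p i).card : ℤ) * A.maxDev 0 ≤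
        (visitedUpTo p (n + 1)).card * A.maxDev 0 := by
      gcongr
      exact visitedUpTo_mono (by omega)
    linarith [ih i (by omega) (by omega)]
  · obtain ⟨hE, -, heq⟩ := hp.2 n hn
    have hw : (A.w (p n).1 (p (n + 1)).1).natAbs ≤ A.maxDev 0 := by
      simpa using natAbs_sub_le_maxDev (lam := 0) hE
    rw [visitedUpTo_succ, Finset.card_insert_of_notMem hmem, Nat.cast_succ, add_one_mul]
    linarith [ih n (by omega) (by omega), neg_abs_le (A.w (p n).1 (p (n + 1)).1),
      Int.natCast_natAbs (A.w (p n).1 (p (n + 1)).1)]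

theorem le_card_mul [Fintype V] (hp : A.IsOptimalPath T p) (h0 : (p 0).2 = 0) :
    T ≤ Fintype.card V * (Fintype.card V * A.maxDev 0 + 1) := by
  have hmaps : ∀ n ∈ Finset.range T,
      p n ∈ (Finset.univ : Finset V) ×ˢ Finset.Icc 0 ((Fintype.card V * A.maxDev 0 : ℕ) : ℤ) := by
    intro n hn
    rw [Finset.mem_range] at hn
    have hcard : ((visitedUpTo p n).card : ℤ) * A.maxDev 0 ≤ Fintype.card V * A.maxDev 0 := by
      gcongr
      exact Finset.card_le_univ _
    simp only [Finset.mem_product, Finset.mem_univ, Finset.mem_Icc, true_and]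
    exact ⟨hp.snd_nonneg h0.ge hn, by push_cast; linarith [hp.snd_le_card_mul h0.le hn]⟩
  have := Finset.card_le_card_of_injOn p hmaps (by simpa using hp.injOn)
  rwa [Finset.card_range, Finset.card_product, Finset.card_univ, Int.card_Icc, sub_zero,
    ← Nat.cast_succ, Int.toNat_natCast] at this

end IsOptimalPath

theorem forces_card_mul_of_exists [Fintype V] {v : V} (h : ∃ t, A.Forces t 0 v) :
    A.Forces (Fintype.card V * (Fintype.card V * A.maxDev 0 + 1)) 0 v := by
  have hpos : 0 < Nat.find h := (Nat.find_pos h).mpr (not_forces_zero 0 v)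
  obtain ⟨p, hp0, hp⟩ := exists_isOptimalPath (Nat.find_spec h) (Nat.find_min h (by omega))
  exact (Nat.find_spec h).mono (hp.le_card_mul (by rw [hp0])) le_rfl

variable (A) in
/-- Debt and age of the window open at position `n` of `π`; the window closes, and a fresh one
opens, as soon as an edge pays the debt. -/
def openWindow (π : ℕ → V) : ℕ → ℤ × ℕ
  | 0 => (0, 0)
  | n + 1 =>
    let s := openWindow π n
    if s.1 ≤ A.w (π n) (π (n + 1)) then (0, 0) else (s.1 - A.w (π n) (π (n + 1)), s.2 + 1)

theorem openWindow_congr {π π' : ℕ → V} {n : ℕ} (h : ∀ i ≤ n, π i = π' i) :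
    A.openWindow π n = A.openWindow π' n := by
  induction n with
  | zero => rfl
  | succ n ih =>
    simp only [openWindow, ih fun i hi => h i (by omega), h n (by omega), h (n + 1) le_rfl]

theorem openWindow_fst_nonneg (π : ℕ → V) (n : ℕ) : 0 ≤ (A.openWindow π n).1 := by
  cases n with
  | zero => exact le_rfl
  | succ n =>
    simp only [openWindow]
    split_ifs with h
    · exact le_rfl
    · exact (sub_pos.mpr (not_le.mp h)).le

theorem dirFWMP_of_forall_openWindow_lt {ℓ : ℕ} {π : ℕ → V}
    (h : ∀ n, (A.openWindow π n).2 < ℓ) : A.DirFWMP ℓ 0 π := by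
  have key : ∀ m i, (A.openWindow π i).2 + m = ℓ → ∃ d, 1 ≤ d ∧
      (A.openWindow π i).2 + d ≤ ℓ ∧ (A.openWindow π i).1 ≤ A.winSum π i d := by
    intro m
    induction m with
    | zero => intro i hi; exact absurd (h i) (by omega)
    | succ m ih =>
      intro i hi
      by_cases hclose : (A.openWindow π i).1 ≤ A.w (π i) (π (i + 1))
      · exact ⟨1, le_rfl, by omega, by simpa [winSum] using hclose⟩
      · have hnext : A.openWindow π (i + 1) =
            ((A.openWindow π i).1 - A.w (π i) (π (i + 1)), (A.openWindow π i).2 + 1) := by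
          simp only [openWindow, if_neg hclose]
        obtain ⟨d, -, hd, hsum⟩ := ih (i + 1) (by rw [hnext]; omega)
        rw [hnext] at hd hsum
        exact ⟨d + 1, by omega, by omega, by rw [winSum_succ']; linarith⟩
  intro i
  obtain ⟨d, hd, hdℓ, hsum⟩ := key _ i (Nat.add_sub_cancel' (h i).le)
  exact ⟨d, hd, by omega, by simpa using (openWindow_fst_nonneg π i).trans hsum⟩

variable (A) in
/-- The history `h` and current vertex `v` are read as the play prefix `h ++ [v]`; Player 1 moves
where the debt of the open window can still be paid before the window reaches age `ℓ`. -/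
noncomputable def windowStrategy (ℓ : ℕ) : A.Strategy where
  act h v :=
    let s := A.openWindow (fun i => (h ++ [v]).getD i v) h.length
    if hu : ∃ u, A.E v u ∧ (s.1 ≤ A.w v u ∨ A.Forces (ℓ - s.2 - 1) (s.1 - A.w v u) u) then
      hu.choose
    else (A.nodeadlock v).choose
  legal h v _ := by
    dsimp only
    split
    · next hu => exact hu.choose_spec.1
    · exact (A.nodeadlock v).choose_spec

theorem IsOutcome.windowStrategy_move {ℓ : ℕ} {v : V} {π : ℕ → V}
    (hπ : A.IsOutcome (A.windowStrategy ℓ) v π) {n : ℕ} (hn : π n ∈ A.P1)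
    (hu : ∃ u, A.E (π n) u ∧ ((A.openWindow π n).1 ≤ A.w (π n) u ∨
      A.Forces (ℓ - (A.openWindow π n).2 - 1) ((A.openWindow π n).1 - A.w (π n) u) u)) :
    (A.openWindow π n).1 ≤ A.w (π n) (π (n + 1)) ∨ A.Forces (ℓ - (A.openWindow π n).2 - 1)
      ((A.openWindow π n).1 - A.w (π n) (π (n + 1))) (π (n + 1)) := by
  have hhist : A.openWindow (fun i => ((List.ofFn fun i : Fin n => π i) ++ [π n]).getD i (π n))
      (List.ofFn fun i : Fin n => π i).length = A.openWindow π n := by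
    rw [List.length_ofFn]
    refine openWindow_congr fun i hi => ?_
    rcases hi.lt_or_eq with hi | rfl
    · simp [List.getD_eq_getElem?_getD, List.getElem?_append_left, hi]
    · simp [List.getD_eq_getElem?_getD]
  rw [hπ.2.2 n hn]
  simp only [windowStrategy, hhist]
  rw [dif_pos hu]
  exact hu.choose_spec.2

theorem forces_openWindow_of_isOutcome {ℓ : ℕ} (hall : ∀ u, A.Forces ℓ 0 u) {v : V}
    {π : ℕ → V} (hπ : A.IsOutcome (A.windowStrategy ℓ) v π) (n : ℕ) :
    A.Forces (ℓ - (A.openWindow π n).2) (A.openWindow π n).1 (π n) := by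
  induction n with
  | zero => exact hall _
  | succ n ih =>
    obtain ⟨t, ht⟩ : ∃ t, ℓ - (A.openWindow π n).2 = t + 1 :=
      ⟨ℓ - (A.openWindow π n).2 - 1, by
        have : ℓ - (A.openWindow π n).2 ≠ 0 := fun h0 => by rw [h0] at ih; exact ih
        omega⟩
    rw [ht] at ih
    have hmove : (A.openWindow π n).1 ≤ A.w (π n) (π (n + 1)) ∨
        A.Forces t ((A.openWindow π n).1 - A.w (π n) (π (n + 1))) (π (n + 1)) := by
      by_cases hn : π n ∈ A.P1
      · rw [show t = ℓ - (A.openWindow π n).2 - 1 by omega] at ih ⊢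
        exact hπ.windowStrategy_move hn (ih.1 hn)
      · exact ih.2 hn _ (hπ.2.1 n)
    simp only [openWindow]
    split_ifs with hclose
    · exact hall _
    · rw [show ℓ - ((A.openWindow π n).2 + 1) = t by omega]
      exact hmove.resolve_left hclose

theorem sureWins_dirFWMP_of_forall_forces {ℓ : ℕ} (hall : ∀ u, A.Forces ℓ 0 u) (v : V) :
    A.SureWins {π | A.DirFWMP ℓ 0 π} v :=
  ⟨A.windowStrategy ℓ, fun _ hπ => dirFWMP_of_forall_openWindow_lt fun n => by
    by_contra! h
    have := forces_openWindow_of_isOutcome hall hπ n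
    rw [Nat.sub_eq_zero_of_le h] at this
    exact this⟩

end ArenaZ

theorem all_sure_dirbwmp_iff_all_sure_dirfwmp_general
    {V : Type*} [Fintype V] (A : ArenaZ V) :
    (∀ v : V, A.SureWins {π : ℕ → V | A.DirBWMP 0 π} v) ↔
    (∀ v : V, A.SureWins
      {π : ℕ → V | A.DirFWMP (Fintype.card V * (Fintype.card V * A.maxDev 0 + 1)) 0 π} v) := by
  constructor
  · intro h
    exact ArenaZ.sureWins_dirFWMP_of_forall_forces fun v =>
      ArenaZ.forces_card_mul_of_exists (ArenaZ.exists_forces_of_sureWins_dirBWMP (h v))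
  · intro h v
    obtain ⟨σ, hσ⟩ := h v
    have hcard : 0 < Fintype.card V := Fintype.card_pos_iff.mpr ⟨v⟩
    exact ⟨σ, fun π hπ => ⟨_, Nat.mul_pos hcard (Nat.succ_pos _), hσ π hπ⟩⟩

/-- With `w_max` the maximum absolute payoff and `ℓ' = |V|·(|V|·w_max + 1)`,
every vertex is sure-winning for `DirBWMP(0)` if and only if every vertex is
sure-winning for `DirFWMP(ℓ', 0)`. -/
theorem all_sure_dirbwmp_iff_all_sure_dirfwmp
    {V : Type*} [Fintype V] [Nonempty V] (A : ArenaZ V) :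
    (∀ v : V, A.SureWins {π : ℕ → V | A.DirBWMP 0 π} v) ↔
    (∀ v : V, A.SureWins
      {π : ℕ → V | A.DirFWMP (Fintype.card V * (Fintype.card V * A.maxDev 0 + 1)) 0 π} v) :=
  all_sure_dirbwmp_iff_all_sure_dirfwmp_general A
end

section
/- Inductive property of windows: let w : ℕ → ℝ, λ ∈ ℝ, and i < j be positions such that the λ-window starting at i closes at j, i.e., S(i,j) ≥ λ·(j−i) while S(i,k) < λ·(k−i) for every k with i < k < j. Then for every k with i < k < j one has S(k,j) ≥ λ·(j−k); consequently, for each such k the λ-window starting at k closes at some position ≤ j. -/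
open scoped Classical

/-- `infixSum w i j = S(i,j) = Σ_{t=i}^{j-1} w t`, the total payoff of the
infix `(i, j)` of the payoff sequence `w`. -/
def infixSum (w : ℕ → ℝ) (i j : ℕ) : ℝ :=
  ∑ t ∈ Finset.Ico i j, w t

/-! Payoff totals are additive over consecutive infixes, and so are lengths; hence if the window
`(i, j)` reaches mean `λ` while its prefix `(i, k)` stays at or below it, the suffix `(k, j)`
must reach mean `λ` on its own. -/

theorem infixSum_add_infixSum {w : ℕ → ℝ} {i k j : ℕ} (hik : i ≤ k) (hkj : k ≤ j) :
    infixSum w i k + infixSum w k j = infixSum w i j :=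
  Finset.sum_Ico_consecutive w hik hkj

theorem le_infixSum_right_of_infixSum_left_le {w : ℕ → ℝ} {lam : ℝ} {i k j : ℕ}
    (hik : i ≤ k) (hkj : k ≤ j) (hwindow : lam * ((j - i : ℕ) : ℝ) ≤ infixSum w i j)
    (hprefix : infixSum w i k ≤ lam * ((k - i : ℕ) : ℝ)) :
    lam * ((j - k : ℕ) : ℝ) ≤ infixSum w k j := by
  have hlength : ((j - i : ℕ) : ℝ) = ((k - i : ℕ) : ℝ) + ((j - k : ℕ) : ℝ) := by
    exact_mod_cast (by omega : j - i = (k - i) + (j - k))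
  have hsplit := infixSum_add_infixSum (w := w) hik hkj
  rw [hlength, mul_add] at hwindow
  linarith

theorem inductive_property_of_windows_general (w : ℕ → ℝ) (lam : ℝ) (i j : ℕ)
    (hclose : lam * ((j - i : ℕ) : ℝ) ≤ infixSum w i j)
    (hopen : ∀ k : ℕ, i < k → k < j → infixSum w i k < lam * ((k - i : ℕ) : ℝ)) :
    ∀ k : ℕ, i < k → k < j →
      lam * ((j - k : ℕ) : ℝ) ≤ infixSum w k j ∧
      ∃ j' : ℕ, k < j' ∧ j' ≤ j ∧ lam * ((j' - k : ℕ) : ℝ) ≤ infixSum w k j' := by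
  intro k hik hkj
  have hsuffix : lam * ((j - k : ℕ) : ℝ) ≤ infixSum w k j :=
    le_infixSum_right_of_infixSum_left_le hik.le hkj.le hclose (hopen k hik hkj).le
  exact ⟨hsuffix, j, hkj, le_rfl, hsuffix⟩

/-- Inductive property of windows: if the `λ`-window starting at `i` closes at
`j`, then for every `k` with `i < k < j` we have `S(k,j) ≥ λ·(j−k)`, and
consequently the `λ`-window starting at `k` closes at some position `≤ j`. -/
theorem inductive_property_of_windows (w : ℕ → ℝ) (lam : ℝ) (i j : ℕ) (hij : i < j)
    (hclose : lam * ((j - i : ℕ) : ℝ) ≤ infixSum w i j)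
    (hopen : ∀ k : ℕ, i < k → k < j → infixSum w i k < lam * ((k - i : ℕ) : ℝ)) :
    ∀ k : ℕ, i < k → k < j →
      lam * ((j - k : ℕ) : ℝ) ≤ infixSum w k j ∧
      ∃ j' : ℕ, k < j' ∧ j' ≤ j ∧ lam * ((j' - k : ℕ) : ℝ) ≤ infixSum w k j' :=
  inductive_property_of_windows_general w lam i j hclose hopen
end

section
/- Let w : ℕ → ℝ, λ ∈ ℝ, and let ℓ ≥ 1 be an integer such that every λ-window of w closes within ℓ steps, i.e., for every i ∈ ℕ there exists d with 1 ≤ d ≤ ℓ and S(i,i+d) ≥ λ·d. Then no λ-window is open at position 0, for every position j at which no λ-window is open there exists a position j' with j < j' ≤ j + ℓ at which no λ-window is open, and consequently for every n ∈ ℕ there exist at least n + 1 positions ≤ n·ℓ at which no λ-window is open. -/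
open scoped Classical

/-- A `λ`-window is open at position `j` if some window that started strictly
before `j` has not yet closed by `j`. -/
def WindowOpenAt (w : ℕ → ℝ) (lam : ℝ) (j : ℕ) : Prop :=
  ∃ i : ℕ, i < j ∧ ∀ k : ℕ, i < k → k ≤ j → infixSum w i k < lam * ((k - i : ℕ) : ℝ)

lemma infixSum_add (w : ℕ → ℝ) {a b c : ℕ} (hab : a ≤ b) (hbc : b ≤ c) :
    infixSum w a b + infixSum w b c = infixSum w a c :=
  Finset.sum_Ico_consecutive _ hab hbc

lemma step_lemma (w : ℕ → ℝ) (lam : ℝ) (ℓ : ℕ)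
    (hwin : ∀ i : ℕ, ∃ d : ℕ, 1 ≤ d ∧ d ≤ ℓ ∧ lam * (d : ℝ) ≤ infixSum w i (i + d))
    (j : ℕ) (hj : ¬ WindowOpenAt w lam j) :
    ∃ j' : ℕ, j < j' ∧ j' ≤ j + ℓ ∧ ¬ WindowOpenAt w lam j' := by
  classical
  have hP : ∃ d, 1 ≤ d ∧ d ≤ ℓ ∧ lam * (d : ℝ) ≤ infixSum w j (j + d) := hwin j
  obtain ⟨hd1, hdℓ, hdS⟩ := Nat.find_spec hP
  set d := Nat.find hP with hdd
  refine ⟨j + d, by omega, by omega, ?_⟩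
  rintro ⟨i, hij, hk⟩
  by_cases hi : i < j
  · exact hj ⟨i, hi, fun k hk1 hk2 => hk k hk1 (by omega)⟩
  · push_neg at hi
    rcases eq_or_lt_of_le hi with hij2 | hji
    · have h := hk (j + d) (by omega) le_rfl
      have hcast : ((j + d - i : ℕ) : ℝ) = (d : ℝ) := by
        have he : j + d - i = d := by omega
        rw [he]
      rw [hcast] at h
      have heq : j + d = i + d := by omega
      rw [heq] at h
      rw [hij2] at hdS
      linarith
    · set e := i - j with he
      have hie : i = j + e := by omega
      have he1 : 1 ≤ e := by omega
      have hed : e < d := by omega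
      have hSe : infixSum w j (j + e) < lam * (e : ℝ) := by
        by_contra hcon
        push_neg at hcon
        exact Nat.find_min hP hed ⟨he1, by omega, hcon⟩
      have h2 := hk (j + d) (by omega) le_rfl
      have hcast : ((j + d - i : ℕ) : ℝ) = (d : ℝ) - (e : ℝ) := by
        have : j + d - i = d - e := by omega
        rw [this]; push_cast [Nat.le_of_lt hed]; ring
      rw [hcast] at h2
      have hsum := infixSum_add w (a := j) (b := i) (c := j + d) hi (by omega)
      rw [hie] at hsum h2
      linarith

/-- If every `λ`-window of `w` closes within `ℓ` steps, then no `λ`-window is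
open at position `0`; from every position with no open `λ`-window there is a
later position, at most `ℓ` steps ahead, with no open `λ`-window; and for every
`n` there are at least `n + 1` positions `≤ n·ℓ` with no open `λ`-window. -/
theorem no_open_window_positions (w : ℕ → ℝ) (lam : ℝ) (ℓ : ℕ) (hℓ : 1 ≤ ℓ)
    (hwin : ∀ i : ℕ, ∃ d : ℕ, 1 ≤ d ∧ d ≤ ℓ ∧ lam * (d : ℝ) ≤ infixSum w i (i + d)) :
    ¬ WindowOpenAt w lam 0 ∧
    (∀ j : ℕ, ¬ WindowOpenAt w lam j →
      ∃ j' : ℕ, j < j' ∧ j' ≤ j + ℓ ∧ ¬ WindowOpenAt w lam j') ∧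
    (∀ n : ℕ, n + 1 ≤
      ((Finset.range (n * ℓ + 1)).filter fun j => ¬ WindowOpenAt w lam j).card) := by
  have h0 : ¬ WindowOpenAt w lam 0 := by
    rintro ⟨i, hi, -⟩; omega
  refine ⟨h0, fun j hj => step_lemma w lam ℓ hwin j hj, ?_⟩
  have key : ∀ n : ℕ, ∃ j : ℕ, j ≤ n * ℓ ∧ ¬ WindowOpenAt w lam j ∧
      n + 1 ≤ ((Finset.range (j + 1)).filter fun x => ¬ WindowOpenAt w lam x).card := by
    intro n
    induction n with
    | zero =>
      refine ⟨0, by simp, h0, ?_⟩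
      exact Finset.one_le_card.mpr ⟨0, by simp [h0]⟩
    | succ n ih =>
      obtain ⟨j, hjle, hjopen, hcard⟩ := ih
      obtain ⟨j', h1, h2, h3⟩ := step_lemma w lam ℓ hwin j hjopen
      refine ⟨j', by have hm : (n + 1) * ℓ = n * ℓ + ℓ := by ring
                     omega, h3, ?_⟩
      have hsub : ((Finset.range (j + 1)).filter fun x => ¬ WindowOpenAt w lam x) ⊆
          ((Finset.range (j' + 1)).filter fun x => ¬ WindowOpenAt w lam x) :=
        Finset.filter_subset_filter _ (Finset.range_subset_range.mpr (by omega))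
      have hnot : j' ∉ ((Finset.range (j + 1)).filter fun x => ¬ WindowOpenAt w lam x) := by
        simp only [Finset.mem_filter, Finset.mem_range]
        omega
      have hins : insert j' ((Finset.range (j + 1)).filter fun x => ¬ WindowOpenAt w lam x) ⊆
          ((Finset.range (j' + 1)).filter fun x => ¬ WindowOpenAt w lam x) := by
        intro x hx
        rcases Finset.mem_insert.mp hx with rfl | hx
        · simp [h3]
        · exact hsub hx
      calc n + 1 + 1 ≤ ((Finset.range (j + 1)).filter fun x => ¬ WindowOpenAt w lam x).card + 1 := by
            omega
        _ = (insert j' ((Finset.range (j + 1)).filter fun x => ¬ WindowOpenAt w lam x)).card := by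
            rw [Finset.card_insert_of_notMem hnot]
        _ ≤ _ := Finset.card_le_card hins
  intro n
  obtain ⟨j, hjle, -, hcard⟩ := key n
  calc n + 1 ≤ _ := hcard
    _ ≤ _ := Finset.card_le_card (Finset.filter_subset_filter _ (Finset.range_subset_range.mpr (by omega)))
end

section
/- Every play satisfying the bounded window mean-payoff objective satisfies the mean-payoff objective: let w : ℕ → ℝ and λ ∈ ℝ, and suppose there exist an integer ℓ ≥ 1 and m ∈ ℕ such that for every i ≥ m there exists d with 1 ≤ d ≤ ℓ and S(i,i+d) ≥ λ·d (i.e., w satisfies FWMP(ℓ, λ), hence BWMP(λ)). Then limsup_{n→∞} (1/n)·S(0,n) ≥ λ. -/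
open scoped Classical

/-- Every payoff sequence satisfying `FWMP(ℓ, λ)` (hence `BWMP(λ)`) satisfies
the mean-payoff objective: `limsup_{n→∞} S(0,n)/n ≥ λ`. -/
theorem bwmp_subset_mean_payoff (w : ℕ → ℝ) (lam : ℝ)
    (h : ∃ ℓ : ℕ, 1 ≤ ℓ ∧ ∃ m : ℕ, ∀ i : ℕ, m ≤ i →
      ∃ d : ℕ, 1 ≤ d ∧ d ≤ ℓ ∧ lam * (d : ℝ) ≤ infixSum w i (i + d)) :
    (lam : EReal) ≤
      Filter.limsup (fun n : ℕ => ((infixSum w 0 n / (n : ℝ) : ℝ) : EReal)) Filter.atTop := by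
  obtain ⟨ℓ, hℓ, m, hm⟩ := h
  have hDex : ∀ i, ∃ d : ℕ, 1 ≤ d ∧ (m ≤ i → lam * (d : ℝ) ≤ infixSum w i (i + d)) := by
    intro i
    by_cases hi : m ≤ i
    · obtain ⟨d, hd1, _, hd3⟩ := hm i hi
      exact ⟨d, hd1, fun _ => hd3⟩
    · exact ⟨1, le_refl _, fun hh => absurd hh hi⟩
  choose D hD1 hD2 using hDex
  set a : ℕ → ℕ := fun k => Nat.rec m (fun _ x => x + D x) k with ha
  have ha0 : a 0 = m := rfl
  have haS : ∀ k, a (k + 1) = a k + D (a k) := fun k => rfl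
  have hma : ∀ k, m ≤ a k := by
    intro k; induction k with
    | zero => simp [ha0]
    | succ k ih => rw [haS]; exact le_trans ih (Nat.le_add_right _ _)
  have hak : ∀ k, k ≤ a k := by
    intro k; induction k with
    | zero => exact Nat.zero_le _
    | succ k ih => rw [haS]; have := hD1 (a k); omega
  have key : ∀ k, lam * ((a k : ℝ) - m) ≤ infixSum w m (a k) := by
    intro k; induction k with
    | zero => simp [ha0, infixSum]
    | succ k ih =>
      have hsplit : infixSum w m (a (k + 1))
          = infixSum w m (a k) + infixSum w (a k) (a (k + 1)) := by
        rw [infixSum, infixSum, infixSum,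
          Finset.sum_Ico_consecutive _ (hma k) (by rw [haS]; exact Nat.le_add_right _ _)]
      have h2 : lam * (D (a k) : ℝ) ≤ infixSum w (a k) (a (k + 1)) := by
        rw [haS]; exact hD2 (a k) (hma k)
      have hcast : ((a (k + 1) : ℕ) : ℝ) = (a k : ℝ) + (D (a k) : ℝ) := by
        rw [haS]; push_cast; ring
      rw [hsplit, hcast]
      calc lam * ((a k : ℝ) + (D (a k) : ℝ) - m)
          = lam * ((a k : ℝ) - m) + lam * (D (a k) : ℝ) := by ring
        _ ≤ _ := add_le_add ih h2
  set C : ℝ := infixSum w 0 m - lam * m with hC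
  have hbound : ∀ k, 1 ≤ k → lam + C / (a k : ℝ) ≤ infixSum w 0 (a k) / (a k : ℝ) := by
    intro k hk
    have hk1 : 1 ≤ a k := le_trans hk (hak k)
    have hpos : (0 : ℝ) < (a k : ℝ) := by exact_mod_cast hk1
    have hsplit : infixSum w 0 (a k) = infixSum w 0 m + infixSum w m (a k) := by
      rw [infixSum, infixSum, infixSum,
        Finset.sum_Ico_consecutive _ (Nat.zero_le m) (hma k)]
    have hnum : lam * (a k : ℝ) + C ≤ infixSum w 0 (a k) := by
      rw [hsplit, hC]
      have := key k
      nlinarith [key k]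
    have : (lam * (a k : ℝ) + C) / (a k : ℝ) ≤ infixSum w 0 (a k) / (a k : ℝ) := by
      gcongr
    calc lam + C / (a k : ℝ) = (lam * (a k : ℝ) + C) / (a k : ℝ) := by
          field_simp
      _ ≤ _ := this
  -- For every real c < lam, c ≤ limsup
  have main : ∀ c : ℝ, c < lam → (c : EReal) ≤
      Filter.limsup (fun n : ℕ => ((infixSum w 0 n / (n : ℝ) : ℝ) : EReal)) Filter.atTop := by
    intro c hc
    apply Filter.le_limsup_of_frequently_le'
    rw [Filter.frequently_atTop]
    intro N
    obtain ⟨K0, hK0⟩ := exists_nat_gt (|C| / (lam - c))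
    set K : ℕ := max (max N K0) 1 with hK
    refine ⟨a K, le_trans (le_trans (le_max_left N K0) (le_max_left _ 1)) (hak K), ?_⟩
    have hK1 : 1 ≤ K := le_max_right _ 1
    have hKpos : (0 : ℝ) < (a K : ℝ) := by
      have : 1 ≤ a K := le_trans hK1 (hak K)
      exact_mod_cast this
    have hKge : (K0 : ℝ) ≤ (a K : ℝ) := by
      exact_mod_cast le_trans (le_trans (le_max_right N K0) (le_max_left _ 1)) (hak K)
    have hlc : (0 : ℝ) < lam - c := by linarith
    have habs : |C| / (a K : ℝ) ≤ lam - c := by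
      rcases le_or_gt (a K : ℝ) (|C| / (lam - c)) with hle | hlt
      · exfalso; linarith [lt_of_le_of_lt hle hK0, hKge]
      · rw [div_le_iff₀ hKpos]
        calc |C| = (|C| / (lam - c)) * (lam - c) := by field_simp
          _ ≤ (a K : ℝ) * (lam - c) := by nlinarith [abs_nonneg C]
          _ = (lam - c) * (a K : ℝ) := by ring
    have hCd : -(lam - c) ≤ C / (a K : ℝ) := by
      have h1 : |C / (a K : ℝ)| = |C| / (a K : ℝ) := by
        rw [abs_div, abs_of_pos hKpos]
      have := neg_abs_le (C / (a K : ℝ))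
      rw [h1] at this
      linarith
    have : c ≤ infixSum w 0 (a K) / (a K : ℝ) := by
      have := hbound K hK1
      linarith
    exact_mod_cast this
  by_contra hcon
  push_neg at hcon
  obtain ⟨q, hq1, hq2⟩ := EReal.exists_rat_btwn_of_lt hcon
  have hql : (q : ℝ) < lam := by exact_mod_cast hq2
  have := main (q : ℝ) hql
  have : ((q : ℝ) : EReal) < ((q : ℝ) : EReal) := lt_of_le_of_lt this hq1
  exact lt_irrefl _ this
end

section
/- Necessary number of tosses: fix a real p with 0 < p < 1, an integer m ≥ 1, and a real ε with 0 < ε < 1, and let x_N be the probability that N independent p-biased coin tosses contain a run of at least m consecutive heads. If x_N ≥ 1 − ε, then N·p^m ≥ 1 − ε; equivalently, N ≥ (1 − ε)/p^m. -/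
open MeasureTheory

/-- The Bernoulli measure on `Bool` with parameter `p`: it assigns probability
`p` to `{true}` and `1 − p` to `{false}` (for `0 ≤ p ≤ 1`). -/
noncomputable def bernoulliMeasure (p : ℝ) : Measure Bool :=
  ENNReal.ofReal p • Measure.dirac true + ENNReal.ofReal (1 - p) • Measure.dirac false

instance (p : ℝ) : IsFiniteMeasure (bernoulliMeasure p) := by
  constructor
  simp only [bernoulliMeasure, Measure.add_apply, Measure.smul_apply, smul_eq_mul,
    measure_univ, mul_one]
  exact ENNReal.add_lt_top.mpr ⟨ENNReal.ofReal_lt_top, ENNReal.ofReal_lt_top⟩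

/-- The event that `N` coin tosses contain a run of at least `m` consecutive
heads (`true`s). -/
def runEvent (N m : ℕ) : Set (Fin N → Bool) :=
  {f | ∃ i : ℕ, ∃ h : i + m ≤ N, ∀ k : ℕ, ∀ _ : k < m, f ⟨i + k, by omega⟩ = true}

/-- `x_N(p, m)`: the probability, under the `N`-fold product of the
Bernoulli(`p`) measure on `Bool`, that `N` independent `p`-biased coin tosses
contain a run of at least `m` consecutive heads. -/
noncomputable def coinRunProb (p : ℝ) (m N : ℕ) : ℝ :=
  ((Measure.pi fun _ : Fin N => bernoulliMeasure p) (runEvent N m)).toReal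

/-- Necessary number of tosses: if `x_N ≥ 1 − ε`, then `N·p^m ≥ 1 − ε`;
equivalently, `N ≥ (1 − ε)/p^m`. -/
theorem coinRunProb_necessary_tosses (p : ℝ) (hp0 : 0 < p) (hp1 : p < 1)
    (m : ℕ) (hm : 1 ≤ m) (ε : ℝ) (hε0 : 0 < ε) (hε1 : ε < 1) (N : ℕ)
    (h : 1 - ε ≤ coinRunProb p m N) :
    1 - ε ≤ (N : ℝ) * p ^ m ∧ (1 - ε) / p ^ m ≤ (N : ℝ) := by
  classical
  have hpm : (0:ℝ) < p ^ m := pow_pos hp0 m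
  set μ := Measure.pi fun _ : Fin N => bernoulliMeasure p with hμ
  -- measure of singleton true and univ
  have htrue : bernoulliMeasure p {true} = ENNReal.ofReal p := by
    simp [bernoulliMeasure, Measure.dirac_apply]
  have huniv : bernoulliMeasure p Set.univ = 1 := by
    simp only [bernoulliMeasure, Measure.add_apply, Measure.smul_apply, smul_eq_mul,
      measure_univ, mul_one]
    rw [← ENNReal.ofReal_add hp0.le (by linarith)]
    norm_num
  set s : ℕ → Fin N → Set Bool := fun i j =>
    if i ≤ (j:ℕ) ∧ (j:ℕ) < i + m then {true} else Set.univ with hs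
  have hAi : ∀ i : ℕ, i + m ≤ N → μ (Set.pi Set.univ (s i)) = ENNReal.ofReal p ^ m := by
    intro i hi
    rw [hμ, Measure.pi_pi]
    have : ∀ j : Fin N, bernoulliMeasure p (s i j)
        = if i ≤ (j:ℕ) ∧ (j:ℕ) < i + m then ENNReal.ofReal p else 1 := by
      intro j
      by_cases hj : i ≤ (j:ℕ) ∧ (j:ℕ) < i + m
      · simp only [hs]; rw [if_pos hj, if_pos hj]; exact htrue
      · simp only [hs]; rw [if_neg hj, if_neg hj]; exact huniv
    rw [Finset.prod_congr rfl (fun j _ => this j), Finset.prod_ite, Finset.prod_const,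
      Finset.prod_const, one_pow, mul_one]
    congr 1
    have hcard : (Finset.univ.filter fun j : Fin N => i ≤ (j:ℕ) ∧ (j:ℕ) < i + m)
        = Finset.image (fun k : Fin m => (⟨i + (k:ℕ), by omega⟩ : Fin N)) Finset.univ := by
      ext j
      simp only [Finset.mem_filter, Finset.mem_univ, true_and, Finset.mem_image]
      constructor
      · rintro ⟨h1, h2⟩
        exact ⟨⟨(j:ℕ) - i, by omega⟩, by ext; simp; omega⟩
      · rintro ⟨k, rfl⟩
        simp only []
        constructor <;> simp <;> omega
    rw [hcard, Finset.card_image_of_injective _ (fun a b hab => by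
      have := Fin.mk.injEq .. ▸ hab
      ext; omega), Finset.card_univ, Fintype.card_fin]
  have hsub : runEvent N m ⊆ ⋃ i ∈ (Finset.range N).filter (fun i => i + m ≤ N),
      Set.pi Set.univ (s i) := by
    rintro f ⟨i, hi, hf⟩
    have hmem : i ∈ (Finset.range N).filter (fun i => i + m ≤ N) := by
      simp only [Finset.mem_filter, Finset.mem_range]
      exact ⟨by omega, hi⟩
    refine Set.mem_biUnion hmem ?_
    · intro j _
      by_cases hj : i ≤ (j:ℕ) ∧ (j:ℕ) < i + m
      · have := hf ((j:ℕ) - i) (by omega)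
        simp only [hs, hj, if_true]
        have hje : (⟨i + ((j:ℕ) - i), by omega⟩ : Fin N) = j := by ext; simp; omega
        rw [hje] at this
        simp [this]
      · simp [hs, hj]
  have key : coinRunProb p m N ≤ (N:ℝ) * p ^ m := by
    have hb : μ (runEvent N m) ≤ ENNReal.ofReal ((N:ℝ) * p ^ m) := by
      calc μ (runEvent N m)
          ≤ ∑ i ∈ (Finset.range N).filter (fun i => i + m ≤ N),
              μ (Set.pi Set.univ (s i)) :=
            (measure_mono hsub).trans (measure_biUnion_finset_le _ _)
        _ = ∑ i ∈ (Finset.range N).filter (fun i => i + m ≤ N),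
              ENNReal.ofReal p ^ m := by
            refine Finset.sum_congr rfl fun i hi => ?_
            simp only [Finset.mem_filter, Finset.mem_range] at hi
            exact hAi i hi.2
        _ = ((Finset.range N).filter (fun i => i + m ≤ N)).card
              * ENNReal.ofReal p ^ m := by rw [Finset.sum_const, nsmul_eq_mul]
        _ ≤ (N : ENNReal) * ENNReal.ofReal p ^ m := by
            gcongr
            exact_mod_cast (Finset.card_filter_le _ _).trans (by simp)
        _ = ENNReal.ofReal ((N:ℝ) * p ^ m) := by
            rw [ENNReal.ofReal_mul (by positivity), ENNReal.ofReal_natCast,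
              ENNReal.ofReal_pow hp0.le]
    exact ENNReal.toReal_le_of_le_ofReal (by positivity) hb
  refine ⟨le_trans h key, ?_⟩
  rw [div_le_iff₀ hpm]
  linarith [le_trans h key]
end

section
/- Sufficient number of tosses: fix a real p with 0 < p ≤ 1/2, an integer m ≥ 1, and a real ε with 0 < ε < 1, and let x_N be the probability that N independent p-biased coin tosses contain a run of at least m consecutive heads. If m divides N and N ≥ 2.4·m·log(1/ε)/p^m, then x_N ≥ 1 − ε. -/
open MeasureTheory

/-! Cut the `N = n * m` tosses into `n` consecutive blocks of length `m`. Without a run of `m`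
heads no block consists of heads only; the blocks are independent and each consists of heads
with probability `p ^ m`, so this happens with probability at most
`(1 - p ^ m) ^ n ≤ exp (-n p ^ m)`, and the hypothesis on `N` gives `n p ^ m ≥ log (1 / ε)`. -/

open scoped Finset

theorem ProbabilityTheory.iIndepSet.measure_biInter_compl {Ω ι : Type*} [MeasurableSpace Ω]
    {μ : Measure Ω} {A : ι → Set Ω} (h : iIndepSet A μ) (S : Finset ι) :
    μ (⋂ i ∈ S, (A i)ᶜ) = ∏ i ∈ S, μ (A i)ᶜ :=
  ((iIndepSet_iff_iIndep A μ).1 h).meas_biInter fun _ _ =>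
    (MeasurableSpace.measurableSet_generateFrom (Set.mem_singleton _)).compl

section FiberCylinders

variable {ι κ : Type*} [Fintype ι] [DecidableEq κ] {α : ι → Type*}
  [∀ i, MeasurableSpace (α i)] (ν : ∀ i, Measure (α i)) [∀ i, IsProbabilityMeasure (ν i)]
  (b : ι → κ) (s : ∀ i, Set (α i))

theorem MeasureTheory.Measure.pi_pi_fiber (j : κ) :
    Measure.pi ν ({i | b i = j}.pi s) = ∏ i with b i = j, ν i (s i) := by
  rw [← Measure.pi_pi_finset, Finset.coe_filter]
  simp

theorem ProbabilityTheory.iIndepSet_pi_fiber (hs : ∀ i, MeasurableSet (s i)) :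
    iIndepSet (fun j => {i | b i = j}.pi s) (Measure.pi ν) := by
  rw [iIndepSet_iff_meas_biInter fun j => MeasurableSet.pi (Set.to_countable _) fun i _ => hs i]
  intro S
  have hinter :
      ⋂ j ∈ S, {i | b i = j}.pi s = (↑({i | b i ∈ S} : Finset ι) : Set ι).pi s := by
    ext f
    simpa [Set.mem_pi] using ⟨fun h i hi => h _ hi i rfl, fun h _ hj i hi => h i (hi ▸ hj)⟩
  rw [hinter, Measure.pi_pi_finset]
  simp_rw [Measure.pi_pi_fiber]
  exact (Finset.prod_fiberwise_eq_prod_filter _ _ _ _).symm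

end FiberCylinders

theorem isProbabilityMeasure_bernoulliMeasure {p : ℝ} (hp0 : 0 ≤ p) (hp1 : p ≤ 1) :
    IsProbabilityMeasure (bernoulliMeasure p) := by
  constructor
  simp only [bernoulliMeasure, Measure.add_apply, Measure.smul_apply, smul_eq_mul,
    measure_univ, mul_one]
  rw [← ENNReal.ofReal_add hp0 (by linarith), add_sub_cancel, ENNReal.ofReal_one]

@[simp]
theorem bernoulliMeasure_singleton_true (p : ℝ) :
    bernoulliMeasure p {true} = ENNReal.ofReal p := by
  simp [bernoulliMeasure]

theorem card_filter_divNat_eq (n m : ℕ) (j : Fin n) :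
    #{i : Fin (n * m) | i.divNat = j} = m := by
  rw [Finset.card_equiv finProdFinEquiv.symm (t := {j} ×ˢ Finset.univ) (by simp [eq_comm])]
  simp

theorem compl_runEvent_subset (n m : ℕ) :
    (runEvent (n * m) m)ᶜ ⊆
      ⋂ j ∈ Finset.univ, ({i | Fin.divNat i = j}.pi fun _ => {true})ᶜ := by
  intro f hf
  simp only [Set.mem_iInter, Set.mem_compl_iff]
  intro j _ hj
  refine hf ⟨m * j, ?_, fun k hk => hj _ (Fin.ext ?_)⟩
  · nlinarith [j.isLt]
  · rw [Fin.coe_divNat, Nat.mul_add_div (by omega), Nat.div_eq_of_lt hk, add_zero]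

theorem measure_compl_runEvent_le {p : ℝ} (hp0 : 0 ≤ p) (hp1 : p ≤ 1) (n m : ℕ) :
    Measure.pi (fun _ : Fin (n * m) => bernoulliMeasure p) (runEvent (n * m) m)ᶜ
      ≤ ENNReal.ofReal ((1 - p ^ m) ^ n) := by
  have := isProbabilityMeasure_bernoulliMeasure hp0 hp1
  have hpm : 0 ≤ 1 - p ^ m := sub_nonneg.2 (pow_le_one₀ hp0 hp1)
  calc _ ≤ _ := measure_mono (compl_runEvent_subset n m)
    _ = ∏ _ : Fin n, (1 - ENNReal.ofReal p ^ m) := by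
      rw [(ProbabilityTheory.iIndepSet_pi_fiber _ _ _
        fun _ => measurableSet_singleton true).measure_biInter_compl]
      refine Finset.prod_congr rfl fun j _ => ?_
      rw [prob_compl_eq_one_sub (Set.toFinite _).measurableSet, Measure.pi_pi_fiber,
        Finset.prod_const, bernoulliMeasure_singleton_true, card_filter_divNat_eq]
    _ = _ := by
      rw [Finset.prod_const, Finset.card_univ, Fintype.card_fin, ENNReal.ofReal_pow hpm,
        ENNReal.ofReal_sub _ (by positivity), ENNReal.ofReal_one, ENNReal.ofReal_pow hp0]

theorem one_sub_coinRunProb_le {p : ℝ} (hp0 : 0 ≤ p) (hp1 : p ≤ 1) (n m : ℕ) :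
    1 - coinRunProb p m (n * m) ≤ (1 - p ^ m) ^ n := by
  have := isProbabilityMeasure_bernoulliMeasure hp0 hp1
  rw [coinRunProb, ← measureReal_def, ← probReal_compl_eq_one_sub (Set.toFinite _).measurableSet]
  exact ENNReal.toReal_le_of_le_ofReal (pow_nonneg (sub_nonneg.2 (pow_le_one₀ hp0 hp1)) n)
    (measure_compl_runEvent_le hp0 hp1 n m)

theorem one_sub_pow_le_of_log_inv_le {x ε : ℝ} {n : ℕ} (hx : x ≤ 1) (hε : 0 < ε)
    (h : Real.log (1 / ε) ≤ n * x) : (1 - x) ^ n ≤ ε :=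
  calc (1 - x) ^ n ≤ Real.exp (-x) ^ n :=
        pow_le_pow_left₀ (sub_nonneg.2 hx) (Real.one_sub_le_exp_neg x) n
    _ = Real.exp (-(n * x)) := by rw [← Real.exp_nat_mul]; ring_nf
    _ ≤ Real.exp (Real.log ε) := by
        rw [one_div, Real.log_inv] at h
        exact Real.exp_le_exp.2 (by linarith)
    _ = ε := Real.exp_log hε

theorem coinRunProb_sufficient_tosses_general (p : ℝ) (hp0 : 0 < p) (hp : p ≤ 1 / 2)
    (m : ℕ) (hm : 1 ≤ m) (ε : ℝ) (hε0 : 0 < ε) (N : ℕ) (hdvd : m ∣ N)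
    (hN : 2.4 * (m : ℝ) * Real.log (1 / ε) / p ^ m ≤ (N : ℝ)) :
    1 - ε ≤ coinRunProb p m N := by
  obtain ⟨n, rfl⟩ : ∃ n, N = n * m := ⟨N / m, (Nat.div_mul_cancel hdvd).symm⟩
  have hp1 : p ≤ 1 := by linarith
  have hlog : Real.log (1 / ε) ≤ n * p ^ m := by
    have hm0 : (0 : ℝ) < m := by exact_mod_cast hm
    rw [div_le_iff₀ (by positivity), Nat.cast_mul] at hN
    have h24 : 2.4 * Real.log (1 / ε) ≤ n * p ^ m :=
      le_of_mul_le_mul_left (by linarith) hm0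
    have : (0 : ℝ) ≤ n * p ^ m := by positivity
    rcases le_total 0 (Real.log (1 / ε)) with hL | hL <;> linarith
  linarith [one_sub_coinRunProb_le hp0.le hp1 n m, one_sub_pow_le_of_log_inv_le
    (pow_le_one₀ hp0.le hp1) hε0 hlog]

/-- Sufficient number of tosses: if `0 < p ≤ 1/2`, `m ∣ N`, and
`N ≥ 2.4·m·log(1/ε)/p^m`, then `x_N ≥ 1 − ε`. -/
theorem coinRunProb_sufficient_tosses (p : ℝ) (hp0 : 0 < p) (hp : p ≤ 1 / 2)
    (m : ℕ) (hm : 1 ≤ m) (ε : ℝ) (hε0 : 0 < ε) (hε1 : ε < 1) (N : ℕ) (hdvd : m ∣ N)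
    (hN : 2.4 * (m : ℝ) * Real.log (1 / ε) / p ^ m ≤ (N : ℝ)) :
    1 - ε ≤ coinRunProb p m N :=
  coinRunProb_sufficient_tosses_general p hp0 hp m hm ε hε0 N hdvd hN
end
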